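/- arXiv:math/0511099 — 4 statements merged into one kernel-verified Lean document; each statement's English description precedes it below -/
import Mathlib

section
/- Let d, k ≥ 1 and d_1, …, d_k, m_1, …, m_k ≥ 1 be integers with ∑_{i=1}^k d_i·m_i = d, let U ∈ M_d(ℂ) be unitary, and let π : ⊕_{i=1}^k M_{d_i}(ℂ) → M_d(ℂ) be the unital *-embedding π((A_i)_i) = U · diag(A_1 ⊗ 1_{m_1}, …, A_k ⊗ 1_{m_k}) · U*. Let D ∈ M_d(ℂ) be a density matrix, and let D' = (D'_i)_i with D'_i ∈ M_{d_i}(ℂ) be the unique family satisfying ∑_{i=1}^k Tr(D'_i A_i) = Tr(D · π((A_i)_i)) for all (A_i)_i. Then ∑_{i=1}^k S(D'_i) ≤ S(D) + log k + log(max_{1≤i≤k} m_i). -/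
open Matrix
open scoped Kronecker ComplexOrder

/-- Von Neumann entropy of a matrix: `-∑ λᵢ log λᵢ` over the eigenvalues when the
matrix is Hermitian (in particular for positive semidefinite matrices), `0` otherwise. -/
noncomputable def vnEntropy {N : Type*} [Fintype N] [DecidableEq N] (D : Matrix N N ℂ) : ℝ :=
  if h : D.IsHermitian then -∑ i, (h.eigenvalues i) * Real.log (h.eigenvalues i) else 0

section Aux
open Polynomial


/-- Jensen for negMulLog with substochastic weights. -/
lemma jensen_sub {ι : Type*} (t : Finset ι) (w x : ι → ℝ)
    (h0 : ∀ i ∈ t, 0 ≤ w i) (hx : ∀ i ∈ t, 0 ≤ x i) (h1 : ∑ i ∈ t, w i ≤ 1) :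
    ∑ i ∈ t, w i * Real.negMulLog (x i) ≤ Real.negMulLog (∑ i ∈ t, w i * x i) := by
  set s := ∑ i ∈ t, w i with hs
  rcases eq_or_lt_of_le (Finset.sum_nonneg h0) with h | hpos
  · have hall : ∀ i ∈ t, w i = 0 := by
      intro i hi
      exact (Finset.sum_eq_zero_iff_of_nonneg h0).mp h.symm i hi
    have e1 : ∑ i ∈ t, w i * Real.negMulLog (x i) = 0 :=
      Finset.sum_eq_zero fun i hi => by rw [hall i hi, zero_mul]
    have e2 : ∑ i ∈ t, w i * x i = 0 :=
      Finset.sum_eq_zero fun i hi => by rw [hall i hi, zero_mul]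
    rw [e1, e2]
    simp
  · -- s > 0
    set m := ∑ i ∈ t, w i * x i with hm
    have hmnn : 0 ≤ m := Finset.sum_nonneg fun i hi => mul_nonneg (h0 i hi) (hx i hi)
    have hJ : ∑ i ∈ t, (w i / s) • Real.negMulLog (x i)
        ≤ Real.negMulLog (∑ i ∈ t, (w i / s) • x i) := by
      apply Real.concaveOn_negMulLog.le_map_sum
      · intro i hi; exact div_nonneg (h0 i hi) (le_of_lt hpos)
      · rw [← Finset.sum_div]; exact div_self (show s ≠ 0 from ne_of_gt hpos)
      · intro i hi; exact hx i hi
    have hsum : ∑ i ∈ t, (w i / s) • x i = m / s := by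
      rw [hm, Finset.sum_div]
      apply Finset.sum_congr rfl; intro i hi
      rw [smul_eq_mul]; ring
    rw [hsum] at hJ
    have hstep : ∑ i ∈ t, w i * Real.negMulLog (x i) ≤ s * Real.negMulLog (m / s) := by
      have := mul_le_mul_of_nonneg_left hJ (le_of_lt hpos)
      calc ∑ i ∈ t, w i * Real.negMulLog (x i)
          = s * ∑ i ∈ t, (w i / s) • Real.negMulLog (x i) := by
            rw [Finset.mul_sum]; apply Finset.sum_congr rfl; intro i hi
            simp only [smul_eq_mul]; field_simp
            rw [mul_div_assoc, div_self (show s ≠ 0 from ne_of_gt hpos), mul_one]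
        _ ≤ s * Real.negMulLog (m / s) := this
    refine hstep.trans ?_
    rcases eq_or_lt_of_le hmnn with h | hmpos
    · rw [← h]; simp
    · have hs1 : Real.log s ≤ 0 := Real.log_nonpos (le_of_lt hpos) h1
      rw [Real.negMulLog, Real.negMulLog, Real.log_div (ne_of_gt hmpos) (ne_of_gt hpos)]
      have : s * (-(m / s) * (Real.log m - Real.log s))
          = -m * Real.log m + m * Real.log s := by
            have hs0 : s ≠ 0 := ne_of_gt hpos
            field_simp; ring
      rw [this]
      nlinarith [mul_nonpos_of_nonneg_of_nonpos (le_of_lt hmpos) hs1]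

/-- Maximum entropy bound for a probability vector. -/
lemma sum_negMulLog_le_log_card {B : Type*} [Fintype B] [DecidableEq B] (w : B → ℝ)
    (h0 : ∀ b, 0 ≤ w b) (h1 : ∑ b, w b = 1) :
    ∑ b, Real.negMulLog (w b) ≤ Real.log (Fintype.card B) := by
  classical
  set T := Finset.univ.filter (fun b => w b ≠ 0) with hT
  have hsumT : ∑ b ∈ T, w b = 1 := by
    rw [hT, Finset.sum_filter_ne_zero, h1]
  have hTpos : ∀ b ∈ T, 0 < w b := by
    intro b hb
    rcases (h0 b).lt_or_eq with h | h
    · exact h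
    · exact absurd h.symm (Finset.mem_filter.mp hb).2
  have hrw : ∑ b, Real.negMulLog (w b) = ∑ b ∈ T, w b * Real.log (w b)⁻¹ := by
    rw [← Finset.sum_filter_of_ne (p := fun b => w b ≠ 0)]
    · apply Finset.sum_congr rfl
      intro b hb
      rw [Real.negMulLog, Real.log_inv]; ring
    · intro b _ hne
      intro h
      apply hne
      simp [Real.negMulLog, h]
  rw [hrw]
  have hJ : ∑ b ∈ T, w b • Real.log (w b)⁻¹ ≤ Real.log (∑ b ∈ T, w b • (w b)⁻¹) := by
    apply (strictConcaveOn_log_Ioi.concaveOn).le_map_sum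
    · intro b hb; exact h0 b
    · exact hsumT
    · intro b hb; exact Set.mem_Ioi.mpr (inv_pos.mpr (hTpos b hb))
  have hsum1 : ∑ b ∈ T, w b • (w b)⁻¹ = (T.card : ℝ) := by
    rw [Finset.sum_congr rfl (fun b hb => by
      rw [smul_eq_mul, mul_inv_cancel₀ (ne_of_gt (hTpos b hb))])]
    simp
  rw [hsum1] at hJ
  refine le_trans (by simpa using hJ) ?_
  apply Real.log_le_log
  · have : T.Nonempty := by
      by_contra h
      rw [Finset.not_nonempty_iff_eq_empty] at h
      rw [h] at hsumT; simp at hsumT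
    exact_mod_cast Finset.card_pos.mpr this
  · exact_mod_cast Finset.card_le_card (Finset.subset_univ T)

lemma hermitian_spectral {n : Type*} [Fintype n] [DecidableEq n]
    {M : Matrix n n ℂ} (hM : M.IsHermitian) :
    M = (hM.eigenvectorUnitary : Matrix n n ℂ) *
        Matrix.diagonal (fun i => ((hM.eigenvalues i : ℝ) : ℂ)) *
        (hM.eigenvectorUnitary : Matrix n n ℂ)ᴴ := by
  conv_lhs => rw [hM.spectral_theorem]
  rfl

lemma trace_conj_diag {n : Type*} [Fintype n] [DecidableEq n]
    {R : Matrix n n ℂ} (hR : R ∈ Matrix.unitaryGroup n ℂ) (v : n → ℂ) :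
    (R * Matrix.diagonal v * Rᴴ).trace = ∑ i, v i := by
  rw [Matrix.trace_mul_cycle]
  rw [show Rᴴ * R = 1 from by simpa [Matrix.star_eq_conjTranspose] using
    (Matrix.mem_unitaryGroup_iff').mp hR]
  simp [Matrix.trace_diagonal]

lemma trace_eq_sum_eigenvalues {n : Type*} [Fintype n] [DecidableEq n]
    {M : Matrix n n ℂ} (hM : M.IsHermitian) :
    M.trace = ∑ i, ((hM.eigenvalues i : ℝ) : ℂ) := by
  conv_lhs => rw [hermitian_spectral hM]
  exact trace_conj_diag (hM.eigenvectorUnitary).2 _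

/-- **Master lemma**: if `ρ = ∑ α, φ α ⊗ (φ α)†` then `S(ρ) ≤ ∑ α f(‖φ α‖²)`. -/
lemma ensemble_entropy_le {n A : Type*} [Fintype n] [DecidableEq n] [Fintype A] [DecidableEq A]
    (φ : A → n → ℂ) {ρ : Matrix n n ℂ}
    (hρ : ρ = ∑ α : A, Matrix.vecMulVec (φ α) (star (φ α))) :
    vnEntropy ρ ≤ ∑ α : A, Real.negMulLog (∑ a, Complex.normSq (φ α a)) := by
  classical
  have hherm : ρ.IsHermitian := by
    rw [hρ]
    show _ᴴ = _
    rw [Matrix.conjTranspose_sum]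
    apply Finset.sum_congr rfl
    intro α _
    ext i j
    simp only [Matrix.conjTranspose_apply, Matrix.vecMulVec_apply, Pi.star_apply, star_mul',
      star_star]
    ring
  set R : Matrix n n ℂ := (hherm.eigenvectorUnitary : Matrix n n ℂ) with hRdef
  have hRmem : R ∈ Matrix.unitaryGroup n ℂ := hherm.eigenvectorUnitary.2
  have hRR : R * Rᴴ = 1 := by
    simpa [Matrix.star_eq_conjTranspose] using (Matrix.mem_unitaryGroup_iff).mp hRmem
  set μ : n → ℝ := hherm.eigenvalues with hμdef
  have hdiag : Rᴴ * ρ * R = Matrix.diagonal (fun l => ((μ l : ℝ) : ℂ)) :=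
    by
      have hRR' : Rᴴ * R = 1 := by
        simpa [Matrix.star_eq_conjTranspose] using (Matrix.mem_unitaryGroup_iff').mp hRmem
      conv_lhs => rw [hermitian_spectral hherm]
      show Rᴴ * (R * Matrix.diagonal (fun l => ((μ l : ℝ) : ℂ)) * Rᴴ) * R = _
      rw [Matrix.mul_assoc, Matrix.mul_assoc, hRR', Matrix.mul_one, ← Matrix.mul_assoc, hRR',
        Matrix.one_mul]
  set c : n → A → ℂ := fun l α => ∑ x, (starRingEnd ℂ) (R x l) * φ α x with hcdef
  -- key1 : Gram structure of the rows
  have key1 : ∀ l l', ∑ α, c l α * (starRingEnd ℂ) (c l' α)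
      = Matrix.diagonal (fun l => ((μ l : ℝ) : ℂ)) l l' := by
    intro l l'
    rw [← hdiag, hρ, Matrix.mul_sum, Matrix.sum_mul, Matrix.sum_apply]
    apply Finset.sum_congr rfl
    intro α _
    have e1 : (Rᴴ * Matrix.vecMulVec (φ α) (star (φ α)) * R) l l'
        = (∑ p, (starRingEnd ℂ) (R p l) * φ α p) * ∑ q, (starRingEnd ℂ) (φ α q) * R q l' := by
      simp only [Matrix.mul_apply, Matrix.vecMulVec_apply, Matrix.conjTranspose_apply,
        Pi.star_apply, RCLike.star_def]
      rw [Finset.sum_mul_sum]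
      rw [Finset.sum_comm]
      apply Finset.sum_congr rfl; intro q _
      rw [Finset.sum_mul]
      apply Finset.sum_congr rfl; intro p _
      ring
    rw [e1]
    congr 1
    rw [_root_.map_sum]
    apply Finset.sum_congr rfl; intro q _
    simp only [_root_.map_mul, RingHomCompTriple.comp_apply, RingHom.id_apply, starRingEnd_self_apply]
    ring
  have hμnn : ∀ l, μ l = ∑ α, Complex.normSq (c l α) := by
    intro l
    have := key1 l l
    rw [Matrix.diagonal_apply_eq] at this
    have h2 : ∑ α, c l α * (starRingEnd ℂ) (c l α) = ((∑ α, Complex.normSq (c l α) : ℝ) : ℂ) := by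
      push_cast
      apply Finset.sum_congr rfl; intro α _
      rw [Complex.mul_conj]
    rw [h2] at this
    exact_mod_cast this.symm
  have hμ0 : ∀ l, 0 ≤ μ l := fun l => (hμnn l) ▸ Finset.sum_nonneg fun α _ => Complex.normSq_nonneg _
  have hczero : ∀ l α, μ l = 0 → c l α = 0 := by
    intro l α h
    have hz : ∑ β, Complex.normSq (c l β) = 0 := by rw [← hμnn l]; exact h
    have h2 : ∀ β ∈ Finset.univ, Complex.normSq (c l β) = 0 :=
      (Finset.sum_eq_zero_iff_of_nonneg (fun β _ => Complex.normSq_nonneg _)).mp hz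
    exact Complex.normSq_eq_zero.mp (h2 α (Finset.mem_univ _))
  -- key_q : column norms
  have key_q : ∀ α, ∑ l, Complex.normSq (c l α) = ∑ a, Complex.normSq (φ α a) := by
    intro α
    have hc : ((∑ l, Complex.normSq (c l α) : ℝ) : ℂ) = ((∑ a, Complex.normSq (φ α a) : ℝ) : ℂ) := by
      push_cast
      have e1 : ∀ l, (Complex.normSq (c l α) : ℂ) = c l α * (starRingEnd ℂ) (c l α) :=
        fun l => (Complex.mul_conj _).symm
      rw [Finset.sum_congr rfl (fun l _ => e1 l)]
      have e2 : ∀ l, c l α * (starRingEnd ℂ) (c l α)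
          = ∑ x, ∑ y, φ α x * (starRingEnd ℂ) (φ α y) * ((starRingEnd ℂ) (R x l) * R y l) := by
        intro l
        rw [hcdef]
        simp only [_root_.map_sum, _root_.map_mul, RingHomCompTriple.comp_apply, RingHom.id_apply, starRingEnd_self_apply]
        rw [Finset.sum_mul_sum]
        apply Finset.sum_congr rfl; intro x _
        apply Finset.sum_congr rfl; intro y _
        ring
      rw [Finset.sum_congr rfl (fun l _ => e2 l)]
      rw [Finset.sum_comm]
      have e3 : ∀ x, ∑ l, ∑ y, φ α x * (starRingEnd ℂ) (φ α y) * ((starRingEnd ℂ) (R x l) * R y l)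
          = ∑ y, φ α x * (starRingEnd ℂ) (φ α y) * ∑ l, R y l * (starRingEnd ℂ) (R x l) := by
        intro x
        rw [Finset.sum_comm]
        apply Finset.sum_congr rfl; intro y _
        rw [Finset.mul_sum]
        apply Finset.sum_congr rfl; intro l _
        ring
      rw [Finset.sum_congr rfl (fun x _ => e3 x)]
      have e4 : ∀ x y, (∑ l, R y l * (starRingEnd ℂ) (R x l)) = if y = x then 1 else 0 := by
        intro x y
        have : (R * Rᴴ) y x = (1 : Matrix n n ℂ) y x := by rw [hRR]
        simpa [Matrix.mul_apply, Matrix.conjTranspose_apply, Matrix.one_apply,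
          RCLike.star_def] using this
      apply Finset.sum_congr rfl; intro x _
      rw [Finset.sum_congr rfl (fun y _ => by rw [e4 x y])]
      simp [Finset.sum_ite_eq, Complex.mul_conj]
    exact_mod_cast hc
  -- weights
  set w : n → A → ℝ := fun l α => if μ l = 0 then 0 else Complex.normSq (c l α) / μ l with hwdef
  have hw0 : ∀ l α, 0 ≤ w l α := by
    intro l α
    rw [hwdef]
    by_cases h : μ l = 0
    · simp [h]
    · simp only [if_neg h]
      exact div_nonneg (Complex.normSq_nonneg _) (hμ0 l)
  -- Bessel inequality
  have bessel : ∀ α, ∑ l, w l α ≤ 1 := by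
    intro α
    set s := ∑ l, w l α with hsdef
    set g : n → ℂ := fun l => if μ l = 0 then 0
      else (starRingEnd ℂ) (c l α) * (((μ l : ℝ) : ℂ))⁻¹ with hgdef
    set u : A → ℂ := fun β => if β = α then 1 else 0 with hudef
    set v : A → ℂ := fun β => ∑ l, g l * c l β with hvdef
    have hvα : v α = (s : ℂ) := by
      show ∑ l, g l * c l α = (s : ℂ)
      rw [hsdef]
      push_cast
      apply Finset.sum_congr rfl
      intro l _
      by_cases h : μ l = 0
      · simp [hgdef, hwdef, h]
      · have hμc : ((μ l : ℝ) : ℂ) ≠ 0 := Complex.ofReal_ne_zero.mpr h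
        simp only [hgdef, hwdef, if_neg h]
        rw [Complex.ofReal_div, div_eq_mul_inv, ← Complex.mul_conj]
        ring
    have S1 : ∑ β, u β * (starRingEnd ℂ) (u β) = 1 := by
      rw [hudef]
      simp [Finset.sum_ite_eq, apply_ite (starRingEnd ℂ)]
    have S2 : ∑ β, u β * (starRingEnd ℂ) (v β) = (s : ℂ) := by
      rw [Finset.sum_eq_single α (fun b _ hb => by simp [hudef, hb])
        (fun h => absurd (Finset.mem_univ α) h)]
      simp [hudef, hvα, Complex.conj_ofReal]
    have S3 : ∑ β, v β * (starRingEnd ℂ) (u β) = (s : ℂ) := by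
      rw [Finset.sum_eq_single α (fun b _ hb => by simp [hudef, hb])
        (fun h => absurd (Finset.mem_univ α) h)]
      simp [hudef, hvα]
    have S4 : ∑ β, v β * (starRingEnd ℂ) (v β) = (s : ℂ) := by
      have e1 : ∀ β, v β * (starRingEnd ℂ) (v β)
          = ∑ l, ∑ l', g l * (starRingEnd ℂ) (g l') * (c l β * (starRingEnd ℂ) (c l' β))  := by
        intro β
        rw [hvdef]
        simp only [_root_.map_sum, _root_.map_mul]
        rw [Finset.sum_mul_sum]
        apply Finset.sum_congr rfl; intro l _
        apply Finset.sum_congr rfl; intro l' _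
        ring
      rw [Finset.sum_congr rfl (fun β _ => e1 β), Finset.sum_comm]
      have e2 : ∀ l, ∑ β, ∑ l', g l * (starRingEnd ℂ) (g l') * (c l β * (starRingEnd ℂ) (c l' β))
          = ∑ l', g l * (starRingEnd ℂ) (g l') * Matrix.diagonal (fun l => ((μ l : ℝ) : ℂ)) l l' := by
        intro l
        rw [Finset.sum_comm]
        apply Finset.sum_congr rfl; intro l' _
        rw [← key1 l l', Finset.mul_sum]
      rw [Finset.sum_congr rfl (fun l _ => e2 l)]
      have e3 : ∀ l, ∑ l', g l * (starRingEnd ℂ) (g l') * Matrix.diagonal (fun l => ((μ l : ℝ) : ℂ)) l l'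
          = ((w l α : ℝ) : ℂ) := by
        intro l
        rw [Finset.sum_eq_single l]
        · by_cases h : μ l = 0
          · simp [hgdef, h, hwdef]
          · have hμc : ((μ l : ℝ) : ℂ) ≠ 0 := Complex.ofReal_ne_zero.mpr h
            simp only [hgdef, hwdef, if_neg h, Matrix.diagonal_apply_eq, _root_.map_mul,
              map_inv₀, Complex.conj_conj, Complex.conj_ofReal]
            rw [Complex.ofReal_div, div_eq_mul_inv, ← Complex.mul_conj]
            field_simp
        · intro b _ hb
          rw [Matrix.diagonal_apply_ne' _ hb, mul_zero]
        · intro h; exact absurd (Finset.mem_univ l) h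
      rw [Finset.sum_congr rfl (fun l _ => e3 l), hsdef]
      push_cast
      rfl
    have hpos : (0:ℝ) ≤ ∑ β, Complex.normSq (u β - v β) :=
      Finset.sum_nonneg fun β _ => Complex.normSq_nonneg _
    have hval : ((∑ β, Complex.normSq (u β - v β) : ℝ) : ℂ) = 1 - (s:ℂ) := by
      push_cast
      have : ∀ β, ((Complex.normSq (u β - v β) : ℝ) : ℂ)
          = u β * (starRingEnd ℂ) (u β) - u β * (starRingEnd ℂ) (v β)
            - v β * (starRingEnd ℂ) (u β) + v β * (starRingEnd ℂ) (v β) := by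
        intro β
        rw [← Complex.mul_conj]
        simp only [map_sub]
        ring
      rw [Finset.sum_congr rfl (fun β _ => this β)]
      rw [Finset.sum_add_distrib, Finset.sum_sub_distrib, Finset.sum_sub_distrib, S1, S2, S3, S4]
      ring
    have : (∑ β, Complex.normSq (u β - v β) : ℝ) = 1 - s := by
      have := congrArg Complex.re hval
      simpa using this
    linarith [this ▸ hpos]
  -- entropy formula
  have hent : vnEntropy ρ = ∑ l, Real.negMulLog (μ l) := by
    rw [vnEntropy, dif_pos hherm, ← Finset.sum_neg_distrib]
    apply Finset.sum_congr rfl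
    intro l _
    rw [Real.negMulLog]
    ring
  have hrow : ∀ l, μ l ≠ 0 → ∑ α, w l α = 1 := by
    intro l h
    rw [hwdef]
    simp only [if_neg h]
    rw [← Finset.sum_div, ← hμnn l, div_self h]
  have hchain : ∀ α, ∑ l, w l α * Real.negMulLog (μ l)
      ≤ Real.negMulLog (∑ a, Complex.normSq (φ α a)) := by
    intro α
    have hJ := jensen_sub Finset.univ (fun l => w l α) μ (fun l _ => hw0 l α)
      (fun l _ => hμ0 l) (bessel α)
    have heq : ∑ l, w l α * μ l = ∑ a, Complex.normSq (φ α a) := by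
      rw [← key_q α]
      apply Finset.sum_congr rfl; intro l _
      by_cases h : μ l = 0
      · rw [hczero l α h]
        simp [hwdef, h]
      · simp only [hwdef, if_neg h]
        field_simp
    rwa [heq] at hJ
  calc vnEntropy ρ = ∑ l, Real.negMulLog (μ l) := hent
    _ = ∑ l, ∑ α, w l α * Real.negMulLog (μ l) := by
        apply Finset.sum_congr rfl; intro l _
        rw [← Finset.sum_mul]
        by_cases h : μ l = 0
        · rw [h]; simp
        · rw [hrow l h, one_mul]
    _ = ∑ α, ∑ l, w l α * Real.negMulLog (μ l) := Finset.sum_comm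
    _ ≤ ∑ α, Real.negMulLog (∑ a, Complex.normSq (φ α a)) :=
        Finset.sum_le_sum (fun α _ => hchain α)


lemma trace_mul_reindex {n σ : Type*} [Fintype n] [Fintype σ] [DecidableEq n] [DecidableEq σ]
    (V : Matrix n n ℂ) (e : σ ≃ n) (N : Matrix σ σ ℂ) :
    (V * (Matrix.reindex e e N)).trace = ((V.submatrix e e) * N).trace := by
  simp only [Matrix.trace, Matrix.diag_apply, Matrix.mul_apply, Matrix.reindex_apply,
    Matrix.submatrix_apply]
  apply Fintype.sum_equiv e.symm
  intro x
  apply Fintype.sum_equiv e.symm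
  intro y
  simp

lemma trace_mul_blockDiagonal' {k : ℕ} {κ : Fin k → Type*} [∀ i, Fintype (κ i)]
    [∀ i, DecidableEq (κ i)]
    (W : Matrix (Σ i, κ i) (Σ i, κ i) ℂ) (F : ∀ i, Matrix (κ i) (κ i) ℂ) :
    (W * Matrix.blockDiagonal' F).trace
      = ∑ i, ((Matrix.of fun p q => W ⟨i,p⟩ ⟨i,q⟩) * F i).trace := by
  simp only [Matrix.trace, Matrix.diag_apply, Matrix.mul_apply, Matrix.of_apply]
  rw [← Finset.univ_sigma_univ, Finset.sum_sigma]
  apply Finset.sum_congr rfl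
  intro i _
  apply Finset.sum_congr rfl
  intro p _
  -- inner sum over Σ
  rw [Finset.sum_sigma]
  rw [Finset.sum_eq_single i]
  · apply Finset.sum_congr rfl
    intro q _
    rw [Matrix.blockDiagonal'_apply_eq]
  · intro j _ hj
    apply Finset.sum_eq_zero
    intro q _
    rw [Matrix.blockDiagonal'_apply_ne _ _ _ hj, mul_zero]
  · intro h; exact absurd (Finset.mem_univ i) h

lemma trace_mul_kron_one {ν μ : Type*} [Fintype ν] [Fintype μ] [DecidableEq ν] [DecidableEq μ]
    (Wb : Matrix (ν × μ) (ν × μ) ℂ) (A : Matrix ν ν ℂ) :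
    (Wb * (A ⊗ₖ (1 : Matrix μ μ ℂ))).trace
      = ((Matrix.of fun a b => ∑ c, Wb (a,c) (b,c)) * A).trace := by
  have step1 : ∀ a c, (∑ t ∈ Finset.univ ×ˢ Finset.univ, Wb (a,c) t * (A ⊗ₖ (1:Matrix μ μ ℂ)) t (a,c))
      = ∑ b, Wb (a,c) (b,c) * A b a := by
    intro a c
    rw [Finset.sum_product]
    apply Finset.sum_congr rfl
    intro b _
    rw [Finset.sum_eq_single c]
    · simp [Matrix.kroneckerMap_apply, Matrix.one_apply]
    · intro c' _ hc; simp [Matrix.kroneckerMap_apply, Matrix.one_apply, hc]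
    · intro h; exact absurd (Finset.mem_univ c) h
  simp only [Matrix.trace, Matrix.diag_apply, Matrix.mul_apply, Matrix.of_apply]
  rw [← Finset.univ_product_univ, Finset.sum_product]
  apply Finset.sum_congr rfl
  intro a _
  rw [Finset.sum_congr rfl (fun c _ => step1 a c), Finset.sum_comm]
  apply Finset.sum_congr rfl
  intro b _
  rw [Finset.sum_mul]

lemma eq_zero_of_trace_mul_conjTranspose {m n : Type*} [Fintype m] [Fintype n]
    (M : Matrix m n ℂ) (h : (M * Mᴴ).trace = 0) : M = 0 := by
  have key : ((∑ i, ∑ j, Complex.normSq (M i j) : ℝ) : ℂ) = 0 := by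
    rw [← h]
    simp only [Matrix.trace, Matrix.diag_apply, Matrix.mul_apply, Matrix.conjTranspose_apply,
      RCLike.star_def]
    push_cast
    apply Finset.sum_congr rfl; intro i _
    apply Finset.sum_congr rfl; intro j _
    rw [Complex.mul_conj]
  have key2 : (∑ i, ∑ j, Complex.normSq (M i j) : ℝ) = 0 := by exact_mod_cast key
  ext i j
  have h1 : ∀ i ∈ Finset.univ, (0:ℝ) ≤ ∑ j, Complex.normSq (M i j) :=
    fun i _ => Finset.sum_nonneg fun j _ => Complex.normSq_nonneg _
  have h2 := (Finset.sum_eq_zero_iff_of_nonneg h1).mp key2 i (Finset.mem_univ i)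
  have h3 := (Finset.sum_eq_zero_iff_of_nonneg
    (fun j _ => Complex.normSq_nonneg (M i j))).mp h2 j (Finset.mem_univ j)
  simpa using Complex.normSq_eq_zero.mp h3

lemma conj_diag_entry {n m : Type*} [Fintype n] [DecidableEq n] [Fintype m]
    (Q : Matrix m n ℂ) (dv : n → ℂ) (x y : m) :
    (Q * Matrix.diagonal dv * Qᴴ) x y = ∑ α, dv α * (Q x α * (starRingEnd ℂ) (Q y α)) := by
  simp only [Matrix.mul_apply, Matrix.conjTranspose_apply, RCLike.star_def]
  apply Finset.sum_congr rfl
  intro α _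
  have inner : ∑ x1, Q x x1 * Matrix.diagonal dv x1 α = Q x α * dv α := by
    rw [Finset.sum_eq_single α]
    · rw [Matrix.diagonal_apply_eq]
    · intro b _ hb; rw [Matrix.diagonal_apply_ne _ hb, mul_zero]
    · intro h; exact absurd (Finset.mem_univ α) h
  rw [inner]
  ring

end Aux

/-- If `D` is a density matrix on `M_d(ℂ)` and `D' = (D'ᵢ)` is its restriction
to a unitarily embedded multimatrix subalgebra `⊕ᵢ M_{dᵢ}(ℂ)` with multiplicities `mᵢ`, then
`∑ᵢ S(D'ᵢ) ≤ S(D) + log k + log (max mᵢ)`. -/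
theorem stmt0 (d k : ℕ) (hd : 1 ≤ d) (hk : 1 ≤ k)
    (dv mv : Fin k → ℕ) (hdv : ∀ i, 1 ≤ dv i) (hmv : ∀ i, 1 ≤ mv i)
    (hsum : ∑ i, dv i * mv i = d)
    (U : Matrix (Fin d) (Fin d) ℂ)
    (hU : U ∈ Matrix.unitaryGroup (Fin d) ℂ)
    (e : (Σ i : Fin k, Fin (dv i) × Fin (mv i)) ≃ Fin d)
    (D : Matrix (Fin d) (Fin d) ℂ) (hD : D.PosSemidef) (hDtr : D.trace = 1)
    (D' : ∀ i : Fin k, Matrix (Fin (dv i)) (Fin (dv i)) ℂ)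
    (hD' : ∀ A : ∀ i : Fin k, Matrix (Fin (dv i)) (Fin (dv i)) ℂ,
      ∑ i, (D' i * A i).trace =
        (D * (U * (Matrix.reindex e e (Matrix.blockDiagonal'
          (fun i => (A i) ⊗ₖ (1 : Matrix (Fin (mv i)) (Fin (mv i)) ℂ)))) * Uᴴ)).trace) :
    ∑ i, vnEntropy (D' i) ≤
      vnEntropy D + Real.log k + Real.log ((Finset.univ.sup mv : ℕ) : ℝ) := by
  classical
  have hDh : D.IsHermitian := hD.1
  set P : Matrix (Fin d) (Fin d) ℂ := (hDh.eigenvectorUnitary : Matrix (Fin d) (Fin d) ℂ)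
    with hPdef
  set lam : Fin d → ℝ := hDh.eigenvalues with hlamdef
  have hlam0 : ∀ α, 0 ≤ lam α := fun α => hD.eigenvalues_nonneg α
  have hspec : D = P * Matrix.diagonal (fun α => ((lam α : ℝ) : ℂ)) * Pᴴ := hermitian_spectral hDh
  have hsum1 : ∑ α, lam α = 1 := by
    have h := trace_eq_sum_eigenvalues hDh
    rw [hDtr] at h
    exact_mod_cast h.symm
  -- the rotated eigenvector matrix
  set Q : Matrix (Fin d) (Fin d) ℂ := Uᴴ * P with hQdef
  have hPmem : P ∈ Matrix.unitaryGroup (Fin d) ℂ := hDh.eigenvectorUnitary.2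
  have hUHmem : Uᴴ ∈ Matrix.unitaryGroup (Fin d) ℂ := by
    rw [← Matrix.star_eq_conjTranspose]
    exact Unitary.star_mem hU
  have hQmem : Q ∈ Matrix.unitaryGroup (Fin d) ℂ := mul_mem hUHmem hPmem
  have hQcol : ∀ α, ∑ x, Complex.normSq (Q x α) = 1 := by
    intro α
    have h1 : Qᴴ * Q = 1 := by
      simpa [Matrix.star_eq_conjTranspose] using (Matrix.mem_unitaryGroup_iff').mp hQmem
    have h2 : (Qᴴ * Q) α α = 1 := by rw [h1]; simp
    have h3 : ((∑ x, Complex.normSq (Q x α) : ℝ) : ℂ) = 1 := by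
      rw [← h2]
      simp only [Matrix.mul_apply, Matrix.conjTranspose_apply, RCLike.star_def]
      push_cast
      apply Finset.sum_congr rfl
      intro x _
      rw [mul_comm, Complex.mul_conj]
    exact_mod_cast h3
  have hVform : Uᴴ * D * U = Q * Matrix.diagonal (fun α => ((lam α : ℝ) : ℂ)) * Qᴴ := by
    rw [hQdef, Matrix.conjTranspose_mul, Matrix.conjTranspose_conjTranspose]
    conv_lhs => rw [hspec]
    noncomm_ring
  -- partial traces
  set PT : ∀ i : Fin k, Matrix (Fin (dv i)) (Fin (dv i)) ℂ :=
    fun i => Matrix.of fun a b => ∑ c, (Uᴴ * D * U) (e ⟨i,(a,c)⟩) (e ⟨i,(b,c)⟩) with hPTdef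
  have hPTeq : ∀ (Afam : ∀ i : Fin k, Matrix (Fin (dv i)) (Fin (dv i)) ℂ),
      (D * (U * (Matrix.reindex e e (Matrix.blockDiagonal'
          (fun i => (Afam i) ⊗ₖ (1 : Matrix (Fin (mv i)) (Fin (mv i)) ℂ)))) * Uᴴ)).trace
        = ∑ i, ((PT i) * Afam i).trace := by
    intro Afam
    set X := Matrix.reindex e e (Matrix.blockDiagonal'
      (fun i => (Afam i) ⊗ₖ (1 : Matrix (Fin (mv i)) (Fin (mv i)) ℂ))) with hXdef
    have h1 : D * (U * X * Uᴴ) = (D * U * X) * Uᴴ := by noncomm_ring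
    have h2 : Uᴴ * (D * U * X) = (Uᴴ * D * U) * X := by noncomm_ring
    rw [h1, Matrix.trace_mul_comm, h2, hXdef, trace_mul_reindex, trace_mul_blockDiagonal']
    apply Finset.sum_congr rfl
    intro i _
    rw [trace_mul_kron_one]
    rfl
  have hDP : ∀ i, D' i = PT i := by
    intro i0
    set B := D' i0 - PT i0 with hBdef
    set Afam : ∀ i : Fin k, Matrix (Fin (dv i)) (Fin (dv i)) ℂ := Pi.single i0 Bᴴ with hAfamdef
    have htest := hD' Afam
    rw [hPTeq Afam] at htest
    have hL : ∑ i, (D' i * Afam i).trace = (D' i0 * Bᴴ).trace := by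
      rw [Finset.sum_eq_single i0]
      · rw [hAfamdef, Pi.single_eq_same]
      · intro b _ hb; rw [hAfamdef, Pi.single_eq_of_ne hb, Matrix.mul_zero, Matrix.trace_zero]
      · intro h; exact absurd (Finset.mem_univ i0) h
    have hR : ∑ i, (PT i * Afam i).trace = (PT i0 * Bᴴ).trace := by
      rw [Finset.sum_eq_single i0]
      · rw [hAfamdef, Pi.single_eq_same]
      · intro b _ hb; rw [hAfamdef, Pi.single_eq_of_ne hb, Matrix.mul_zero, Matrix.trace_zero]
      · intro h; exact absurd (Finset.mem_univ i0) h
    rw [hL, hR] at htest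
    have hz : (B * Bᴴ).trace = 0 := by
      rw [hBdef, Matrix.sub_mul, Matrix.trace_sub, htest, sub_self]
    have := eq_zero_of_trace_mul_conjTranspose B hz
    exact sub_eq_zero.mp this
  -- ensemble representation of each D' i
  set nn : ∀ i : Fin k, Fin d → Fin (mv i) → ℝ :=
    fun i α c => ∑ a, Complex.normSq (Q (e ⟨i,(a,c)⟩) α) with hnndef
  have hnn0 : ∀ i α c, 0 ≤ nn i α c :=
    fun i α c => Finset.sum_nonneg fun a _ => Complex.normSq_nonneg _
  have hmaster : ∀ i, vnEntropy (D' i)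
      ≤ ∑ β : Fin d × Fin (mv i), Real.negMulLog (lam β.1 * nn i β.1 β.2) := by
    intro i
    set φ : (Fin d × Fin (mv i)) → Fin (dv i) → ℂ :=
      fun β a => ((Real.sqrt (lam β.1) : ℝ) : ℂ) * Q (e ⟨i,(a,β.2)⟩) β.1 with hφdef
    have hrep : D' i = ∑ β : Fin d × Fin (mv i), Matrix.vecMulVec (φ β) (star (φ β)) := by
      rw [hDP i]
      ext a b
      rw [Matrix.sum_apply]
      have hLHS : PT i a b
          = ∑ c, ∑ α, ((lam α : ℝ) : ℂ) * (Q (e ⟨i,(a,c)⟩) α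
              * (starRingEnd ℂ) (Q (e ⟨i,(b,c)⟩) α)) := by
        show (∑ c, (Uᴴ * D * U) (e ⟨i,(a,c)⟩) (e ⟨i,(b,c)⟩)) = _
        apply Finset.sum_congr rfl
        intro c _
        rw [hVform, conj_diag_entry]
      rw [hLHS, Finset.sum_comm, ← Finset.univ_product_univ, Finset.sum_product]
      apply Finset.sum_congr rfl
      intro α _
      apply Finset.sum_congr rfl
      intro c _
      simp only [Matrix.vecMulVec_apply, hφdef, Pi.star_apply, RCLike.star_def, _root_.map_mul,
        Complex.conj_ofReal]
      rw [show ((Real.sqrt (lam α) : ℝ) : ℂ) * Q (e ⟨i,(a,c)⟩) α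
          * (((Real.sqrt (lam α) : ℝ) : ℂ) * (starRingEnd ℂ) (Q (e ⟨i,(b,c)⟩) α))
          = (((Real.sqrt (lam α) : ℝ) : ℂ) * ((Real.sqrt (lam α) : ℝ) : ℂ))
            * (Q (e ⟨i,(a,c)⟩) α * (starRingEnd ℂ) (Q (e ⟨i,(b,c)⟩) α)) from by ring]
      rw [← Complex.ofReal_mul, Real.mul_self_sqrt (hlam0 α)]
    have h := ensemble_entropy_le φ hrep
    refine h.trans (le_of_eq ?_)
    apply Finset.sum_congr rfl
    intro β _
    congr 1
    rw [hnndef]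
    simp only [hφdef]
    rw [Finset.mul_sum]
    apply Finset.sum_congr rfl
    intro a _
    rw [Complex.normSq_mul, Complex.normSq_ofReal, Real.mul_self_sqrt (hlam0 β.1)]
  -- column normalization
  have hcol : ∀ α, ∑ i, ∑ c, nn i α c = 1 := by
    intro α
    have h1 : ∑ i, ∑ c, nn i α c
        = ∑ s : (Σ i : Fin k, Fin (dv i) × Fin (mv i)), Complex.normSq (Q (e s) α) := by
      rw [← Finset.univ_sigma_univ, Finset.sum_sigma]
      apply Finset.sum_congr rfl
      intro i _
      rw [hnndef]
      rw [← Finset.univ_product_univ, Finset.sum_product, Finset.sum_comm]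
    rw [h1]
    rw [Fintype.sum_equiv e (fun s => Complex.normSq (Q (e s) α))
      (fun x => Complex.normSq (Q x α)) (fun s => rfl)]
    exact hQcol α
  -- entropy of D
  have hSD : vnEntropy D = ∑ α, Real.negMulLog (lam α) := by
    rw [vnEntropy, dif_pos hDh, ← Finset.sum_neg_distrib]
    apply Finset.sum_congr rfl
    intro α _
    rw [Real.negMulLog]
    ring
  -- the log bound
  set mmax : ℕ := Finset.univ.sup mv with hmmaxdef
  have hmmax1 : 1 ≤ mmax := le_trans (hmv ⟨0, hk⟩) (Finset.le_sup (Finset.mem_univ (⟨0, hk⟩ : Fin k)))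
  have hHbound : ∀ α, ∑ i, ∑ c, Real.negMulLog (nn i α c) ≤ Real.log k + Real.log mmax := by
    intro α
    have h1 : ∑ i, ∑ c, Real.negMulLog (nn i α c)
        = ∑ s : (Σ i : Fin k, Fin (mv i)), Real.negMulLog (nn s.1 α s.2) := by
      rw [← Finset.univ_sigma_univ, Finset.sum_sigma]
    have h2 : ∑ s : (Σ i : Fin k, Fin (mv i)), nn s.1 α s.2 = 1 := by
      rw [← Finset.univ_sigma_univ, Finset.sum_sigma]
      exact hcol α
    have h3 := sum_negMulLog_le_log_card (fun s : (Σ i : Fin k, Fin (mv i)) => nn s.1 α s.2)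
      (fun s => hnn0 s.1 α s.2) h2
    rw [h1]
    refine h3.trans ?_
    have hcard : Fintype.card (Σ i : Fin k, Fin (mv i)) = ∑ i, mv i := by
      simp [Fintype.card_sigma]
    rw [hcard]
    have hle : (∑ i, mv i) ≤ k * mmax := by
      calc ∑ i, mv i ≤ Finset.univ.card • mmax :=
            Finset.sum_le_card_nsmul Finset.univ mv mmax
              (fun i _ => Finset.le_sup (Finset.mem_univ i))
        _ = k * mmax := by simp [smul_eq_mul]
    have hpos : (0:ℝ) < (∑ i, mv i : ℕ) := by
      have : 1 ≤ ∑ i, mv i :=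
        le_trans (hmv ⟨0, hk⟩) (Finset.single_le_sum (fun i _ => Nat.zero_le _)
          (Finset.mem_univ (⟨0, hk⟩ : Fin k)))
      exact_mod_cast this
    calc Real.log (∑ i, mv i : ℕ) ≤ Real.log ((k * mmax : ℕ) : ℝ) :=
          Real.log_le_log hpos (by exact_mod_cast hle)
      _ = Real.log k + Real.log mmax := by
          push_cast
          rw [Real.log_mul (by positivity) (by positivity)]
  -- final chain
  calc ∑ i, vnEntropy (D' i)
      ≤ ∑ i, ∑ β : Fin d × Fin (mv i), Real.negMulLog (lam β.1 * nn i β.1 β.2) :=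
        Finset.sum_le_sum (fun i _ => hmaster i)
    _ = ∑ i, ∑ α, ∑ c, (nn i α c * Real.negMulLog (lam α)
          + lam α * Real.negMulLog (nn i α c)) := by
        apply Finset.sum_congr rfl
        intro i _
        rw [← Finset.univ_product_univ, Finset.sum_product]
        apply Finset.sum_congr rfl
        intro α _
        apply Finset.sum_congr rfl
        intro c _
        rw [Real.negMulLog_mul]
    _ = ∑ α, (Real.negMulLog (lam α) * ∑ i, ∑ c, nn i α c)
          + ∑ α, lam α * (∑ i, ∑ c, Real.negMulLog (nn i α c)) := by
        rw [← Finset.sum_add_distrib]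
        rw [Finset.sum_comm]
        apply Finset.sum_congr rfl
        intro α _
        rw [Finset.mul_sum, Finset.mul_sum, ← Finset.sum_add_distrib]
        apply Finset.sum_congr rfl
        intro i _
        rw [Finset.mul_sum, Finset.mul_sum, ← Finset.sum_add_distrib]
        apply Finset.sum_congr rfl
        intro c _
        ring
    _ ≤ vnEntropy D + (Real.log k + Real.log mmax) := by
        have p1 : ∑ α, (Real.negMulLog (lam α) * ∑ i, ∑ c, nn i α c) = vnEntropy D := by
          rw [hSD]
          apply Finset.sum_congr rfl
          intro α _
          rw [hcol α, mul_one]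
        have p2 : ∑ α, lam α * (∑ i, ∑ c, Real.negMulLog (nn i α c))
            ≤ Real.log k + Real.log mmax := by
          calc ∑ α, lam α * (∑ i, ∑ c, Real.negMulLog (nn i α c))
              ≤ ∑ α, lam α * (Real.log k + Real.log mmax) :=
                Finset.sum_le_sum (fun α _ =>
                  mul_le_mul_of_nonneg_left (hHbound α) (hlam0 α))
            _ = Real.log k + Real.log mmax := by
                rw [← Finset.sum_mul, hsum1, one_mul]
        rw [p1]
        exact add_le_add_right p2 _
    _ = vnEntropy D + Real.log k + Real.log ((Finset.univ.sup mv : ℕ) : ℝ) := by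
        rw [hmmaxdef]; ring
end

section
/- Let d, k ≥ 1 and d_1, …, d_k, m_1, …, m_k ≥ 1 be integers with ∑_{i=1}^k d_i·m_i = d, let U ∈ M_d(ℂ) be unitary, and let π : ⊕_{i=1}^k M_{d_i}(ℂ) → M_d(ℂ) be the unital *-embedding π((A_i)_i) = U · diag(A_1 ⊗ 1_{m_1}, …, A_k ⊗ 1_{m_k}) · U*. Let D ∈ M_d(ℂ) be a density matrix of rank one (i.e., D = vv* for a unit vector v, corresponding to a pure state), and let D' = (D'_i)_i with D'_i ∈ M_{d_i}(ℂ) be the unique family satisfying ∑_{i=1}^k Tr(D'_i A_i) = Tr(D · π((A_i)_i)) for all (A_i)_i. Then ∑_{i=1}^k S(D'_i) ≤ log k + log(max_{1≤i≤k} m_i). -/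
open Matrix
open scoped Kronecker ComplexOrder

/-- Maximum-entropy bound: a nonnegative distribution supported on at most `n` points has
entropy at most `log n`. -/
lemma maxEnt {ι : Type*} [Fintype ι] (p : ι → ℝ) (h0 : ∀ j, 0 ≤ p j)
    (h1 : ∑ j, p j = 1) (n : ℕ)
    (hcard : (Finset.univ.filter fun j => p j ≠ 0).card ≤ n) :
    -∑ j, p j * Real.log (p j) ≤ Real.log n := by
  classical
  set S := Finset.univ.filter fun j => p j ≠ 0 with hS
  have hmem : ∀ j ∈ S, p j ≠ 0 := fun j hj => (Finset.mem_filter.mp hj).2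
  have hne : ∀ j ∈ Finset.univ, p j * Real.log ((p j)⁻¹) ≠ 0 → p j ≠ 0 := by
    intro j _ h h0; exact h (by rw [h0]; ring)
  have hsumS : ∑ j ∈ S, p j = 1 := by
    rw [← h1]
    exact Finset.sum_filter_of_ne (fun j _ h => by
      intro h0; exact h (by rw [h0]))
  have hSne : S.Nonempty := by
    by_contra h
    rw [Finset.not_nonempty_iff_eq_empty.mp h] at hsumS
    simp at hsumS
  have key : ∑ j ∈ S, p j • Real.log ((p j)⁻¹) ≤ Real.log (∑ j ∈ S, p j • (p j)⁻¹) := by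
    refine (strictConcaveOn_log_Ioi.concaveOn).le_map_sum (fun j _ => h0 j) hsumS ?_
    intro j hj
    exact Set.mem_Ioi.mpr (inv_pos.mpr (lt_of_le_of_ne (h0 j) (Ne.symm (hmem j hj))))
  have hl : -∑ j, p j * Real.log (p j) = ∑ j ∈ S, p j • Real.log ((p j)⁻¹) := by
    have h2 : ∑ j ∈ S, p j • Real.log ((p j)⁻¹) = ∑ j, p j * Real.log ((p j)⁻¹) := by
      simp only [smul_eq_mul]
      exact Finset.sum_filter_of_ne hne
    rw [h2, ← Finset.sum_neg_distrib]
    exact Finset.sum_congr rfl (fun j _ => by rw [Real.log_inv]; ring)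
  have hr : ∑ j ∈ S, p j • (p j)⁻¹ = (S.card : ℝ) := by
    rw [Finset.sum_congr rfl (fun j hj => by
      rw [smul_eq_mul, mul_inv_cancel₀ (hmem j hj)])]
    simp
  rw [hl]
  refine key.trans ?_
  rw [hr]
  exact Real.log_le_log (by exact_mod_cast hSne.card_pos) (by exact_mod_cast hcard)

/-- The trace of a Hermitian matrix is the sum of its eigenvalues. -/
lemma traceEig {n : Type*} [Fintype n] [DecidableEq n] {A : Matrix n n ℂ}
    (hA : A.IsHermitian) : A.trace = ∑ i, (hA.eigenvalues i : ℂ) := by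
  conv_lhs => rw [hA.spectral_theorem]
  rw [Unitary.conjStarAlgAut_apply, Matrix.trace_mul_cycle, Unitary.coe_star_mul_self, Matrix.one_mul, Matrix.trace_diagonal]
  simp

lemma bdDot {k d : ℕ} {dv mv : Fin k → ℕ}
    (e : (Σ i : Fin k, Fin (dv i) × Fin (mv i)) ≃ Fin d)
    (C : ∀ i, Matrix (Fin (dv i) × Fin (mv i)) (Fin (dv i) × Fin (mv i)) ℂ)
    (w : Fin d → ℂ) :
    star w ⬝ᵥ ((Matrix.reindex e e (Matrix.blockDiagonal' C)) *ᵥ w)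
      = ∑ i, ∑ x, ∑ y, (starRingEnd ℂ) (w (e ⟨i, x⟩)) * (C i x y * w (e ⟨i, y⟩)) := by
  classical
  simp only [dotProduct, Matrix.mulVec, Pi.star_apply, Complex.star_def]
  rw [← Equiv.sum_comp e (fun b : Fin d => (starRingEnd ℂ) (w b) *
      ∑ c, (Matrix.reindex e e (Matrix.blockDiagonal' C)) b c * w c)]
  rw [← Finset.univ_sigma_univ, Finset.sum_sigma]
  refine Finset.sum_congr rfl (fun i _ => Finset.sum_congr rfl (fun x _ => ?_))
  rw [← Equiv.sum_comp e (fun c : Fin d =>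
      (Matrix.reindex e e (Matrix.blockDiagonal' C)) (e ⟨i, x⟩) c * w c)]
  rw [← Finset.univ_sigma_univ, Finset.sum_sigma, Finset.mul_sum]
  rw [Finset.sum_eq_single i]
  · rw [Finset.mul_sum]
    refine Finset.sum_congr rfl (fun y _ => ?_)
    simp [Matrix.blockDiagonal'_apply_eq, mul_assoc]
  · intro j _ hij
    rw [Finset.mul_sum]
    apply Finset.sum_eq_zero
    intro y _
    simp [Matrix.blockDiagonal'_apply_ne _ _ _ (Ne.symm hij)]
  · intro h; exact absurd (Finset.mem_univ i) h

lemma traceD {d : ℕ} (v : Fin d → ℂ) (M : Matrix (Fin d) (Fin d) ℂ) :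
    (Matrix.vecMulVec v (star v) * M).trace = star v ⬝ᵥ (M *ᵥ v) := by
  simp only [Matrix.trace, Matrix.diag, Matrix.mul_apply, Matrix.vecMulVec_apply,
    dotProduct, Matrix.mulVec, Pi.star_apply]
  rw [Finset.sum_comm]
  refine Finset.sum_congr rfl (fun b _ => ?_)
  rw [Finset.mul_sum]
  refine Finset.sum_congr rfl (fun a _ => ?_)
  ring

lemma traceConj {d : ℕ} (v : Fin d → ℂ) (U B : Matrix (Fin d) (Fin d) ℂ) :
    (Matrix.vecMulVec v (star v) * (U * B * Uᴴ)).trace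
      = star (Uᴴ *ᵥ v) ⬝ᵥ (B *ᵥ (Uᴴ *ᵥ v)) := by
  rw [traceD]
  rw [← Matrix.mulVec_mulVec, ← Matrix.mulVec_mulVec]
  rw [Matrix.dotProduct_mulVec]
  congr 1
  rw [Matrix.star_mulVec, Matrix.conjTranspose_conjTranspose]

/-- If `D = vv*` is a rank-one density matrix (pure state) on `M_d(ℂ)` and
`D' = (D'ᵢ)` is its restriction to a unitarily embedded multimatrix subalgebra
`⊕ᵢ M_{dᵢ}(ℂ)` with multiplicities `mᵢ`, then `∑ᵢ S(D'ᵢ) ≤ log k + log (max mᵢ)`. -/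
theorem stmt1 (d k : ℕ) (hd : 1 ≤ d) (hk : 1 ≤ k)
    (dv mv : Fin k → ℕ) (hdv : ∀ i, 1 ≤ dv i) (hmv : ∀ i, 1 ≤ mv i)
    (hsum : ∑ i, dv i * mv i = d)
    (U : Matrix (Fin d) (Fin d) ℂ)
    (hU : U ∈ Matrix.unitaryGroup (Fin d) ℂ)
    (e : (Σ i : Fin k, Fin (dv i) × Fin (mv i)) ≃ Fin d)
    (v : Fin d → ℂ) (hv : ∑ i, ‖v i‖ ^ 2 = 1)
    (D : Matrix (Fin d) (Fin d) ℂ) (hDv : D = Matrix.vecMulVec v (star v))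
    (D' : ∀ i : Fin k, Matrix (Fin (dv i)) (Fin (dv i)) ℂ)
    (hD' : ∀ A : ∀ i : Fin k, Matrix (Fin (dv i)) (Fin (dv i)) ℂ,
      ∑ i, (D' i * A i).trace =
        (D * (U * (Matrix.reindex e e (Matrix.blockDiagonal'
          (fun i => (A i) ⊗ₖ (1 : Matrix (Fin (mv i)) (Fin (mv i)) ℂ)))) * Uᴴ)).trace) :
    ∑ i, vnEntropy (D' i) ≤
      Real.log k + Real.log ((Finset.univ.sup mv : ℕ) : ℝ) := by
  classical
  subst hDv
  set w : Fin d → ℂ := Uᴴ *ᵥ v with hw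
  set N : ∀ i : Fin k, Matrix (Fin (dv i)) (Fin (mv i)) ℂ :=
    fun i => Matrix.of (fun p s => w (e ⟨i, (p, s)⟩)) with hN
  -- Step 1: the explicit form of `D' i`
  have hform : ∀ i, D' i = N i * (N i)ᴴ := by
    intro i
    ext p q
    have h := hD' (Function.update (fun j => (0 : Matrix (Fin (dv j)) (Fin (dv j)) ℂ)) i
      (Matrix.single q p 1))
    rw [Finset.sum_eq_single i (fun j _ hj => by rw [Function.update_of_ne hj]; simp)
      (fun hmem => absurd (Finset.mem_univ i) hmem)] at h
    rw [Function.update_self] at h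
    rw [traceConj, bdDot] at h
    rw [Finset.sum_eq_single i (fun j _ hj => by
        rw [Function.update_of_ne hj]
        apply Finset.sum_eq_zero; intro x _
        apply Finset.sum_eq_zero; intro y _
        simp)
      (fun hmem => absurd (Finset.mem_univ i) hmem)] at h
    rw [Function.update_self] at h
    have hL : (D' i * Matrix.single q p 1).trace = D' i p q := by
      simp [Matrix.trace, Matrix.diag, Matrix.mul_apply, Matrix.single,
        Matrix.of_apply, ite_and, Finset.sum_ite_eq]
    rw [hL] at h
    rw [h, Matrix.mul_apply]
    rw [Fintype.sum_prod_type]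
    rw [Finset.sum_eq_single q (fun b _ hb => by
        apply Finset.sum_eq_zero; intro s _
        apply Finset.sum_eq_zero; intro y _
        simp [Matrix.single, Ne.symm hb])
      (fun hmem => absurd (Finset.mem_univ q) hmem)]
    refine Finset.sum_congr rfl (fun s _ => ?_)
    rw [Fintype.sum_prod_type]
    simp only [Matrix.kroneckerMap_apply, Matrix.single, Matrix.one_apply,
      Matrix.of_apply, Matrix.conjTranspose_apply, hN, ite_and, mul_ite, ite_mul,
      one_mul, zero_mul, mul_zero, mul_one, Complex.star_def]
    rw [Finset.sum_comm]
    simp [Finset.sum_ite_eq, Finset.sum_ite_eq']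
    ring
  -- positive semidefiniteness
  have hpsd : ∀ i, (D' i).PosSemidef := fun i =>
    (hform i) ▸ Matrix.posSemidef_self_mul_conjTranspose (N i)
  have hH : ∀ i, (D' i).IsHermitian := fun i => (hpsd i).1
  -- Step 2: total trace is 1
  have htr : ∑ i, (D' i).trace = 1 := by
    have h := hD' (fun _ => 1)
    have hone : (Matrix.reindex e e (Matrix.blockDiagonal'
        (fun i => (1 : Matrix (Fin (dv i)) (Fin (dv i)) ℂ) ⊗ₖ
          (1 : Matrix (Fin (mv i)) (Fin (mv i)) ℂ)))) = 1 := by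
      rw [show (fun i => (1 : Matrix (Fin (dv i)) (Fin (dv i)) ℂ) ⊗ₖ
          (1 : Matrix (Fin (mv i)) (Fin (mv i)) ℂ))
          = fun i => (1 : Matrix (Fin (dv i) × Fin (mv i)) (Fin (dv i) × Fin (mv i)) ℂ)
          from funext fun i => Matrix.one_kronecker_one]
      rw [show (fun i : Fin k =>
          (1 : Matrix (Fin (dv i) × Fin (mv i)) (Fin (dv i) × Fin (mv i)) ℂ)) =
          (1 : ∀ i : Fin k, Matrix (Fin (dv i) × Fin (mv i)) (Fin (dv i) × Fin (mv i)) ℂ)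
          from rfl]
      rw [Matrix.blockDiagonal'_one]
      simp [Matrix.reindex_apply, Matrix.submatrix_one_equiv]
    rw [hone, Matrix.mul_one] at h
    have hUU : U * Uᴴ = 1 := by
      have h2 := Matrix.mem_unitaryGroup_iff.mp hU
      simpa [Matrix.star_eq_conjTranspose] using h2
    rw [hUU] at h
    simp only [Matrix.mul_one] at h
    rw [h]
    have hvv : (Matrix.vecMulVec v (star v)).trace = ((∑ a, ‖v a‖ ^ 2 : ℝ) : ℂ) := by
      push_cast
      simp [Matrix.trace, Matrix.diag, Matrix.vecMulVec_apply, Complex.mul_conj,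
        Complex.normSq_eq_norm_sq]
    rw [hvv, hv]
    norm_num
  -- Step 3: eigenvalues sum to 1
  have hsum1 : ∑ x : (Σ i : Fin k, Fin (dv i)), (hH x.1).eigenvalues x.2 = 1 := by
    have hc : ((∑ x : (Σ i : Fin k, Fin (dv i)), (hH x.1).eigenvalues x.2 : ℝ) : ℂ) = 1 := by
      push_cast
      rw [← Finset.univ_sigma_univ, Finset.sum_sigma]
      calc ∑ i, ∑ j, ((hH i).eigenvalues j : ℂ)
          = ∑ i, (D' i).trace := Finset.sum_congr rfl fun i _ => (traceEig (hH i)).symm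
        _ = 1 := htr
    exact_mod_cast hc
  -- Step 4: support bound from the rank bound
  have hcard : ∀ i, (Finset.univ.filter fun j => (hH i).eigenvalues j ≠ 0).card ≤ mv i := by
    intro i
    have h1 : (D' i).rank = Fintype.card {j // (hH i).eigenvalues j ≠ 0} :=
      (hH i).rank_eq_card_non_zero_eigs
    have h2 : (D' i).rank ≤ mv i := by
      rw [hform i]
      exact le_trans (Matrix.rank_mul_le_left _ _)
        (le_trans (Matrix.rank_le_card_width _) (by simp))
    rw [Fintype.card_subtype] at h1
    omega
  -- Step 5: conclude via the maximum-entropy bound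
  set M : ℕ := Finset.univ.sup mv with hMdef
  have hM1 : 1 ≤ M := le_trans (hmv ⟨0, hk⟩) (Finset.le_sup (Finset.mem_univ _))
  set p : (Σ i : Fin k, Fin (dv i)) → ℝ := fun x => (hH x.1).eigenvalues x.2 with hp
  have hsupp : (Finset.univ.filter fun x => p x ≠ 0).card ≤ k * M := by
    have hfil : (Finset.univ : Finset (Σ i : Fin k, Fin (dv i))).filter (fun x => p x ≠ 0)
        = (Finset.univ : Finset (Fin k)).sigma
          (fun i => Finset.univ.filter fun j => (hH i).eigenvalues j ≠ 0) := by
      ext ⟨i, j⟩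
      simp [hp, Finset.mem_sigma]
    rw [hfil, Finset.card_sigma]
    calc ∑ i, (Finset.univ.filter fun j => (hH i).eigenvalues j ≠ 0).card
        ≤ ∑ _i : Fin k, M :=
          Finset.sum_le_sum fun i _ => le_trans (hcard i) (Finset.le_sup (Finset.mem_univ _))
      _ = k * M := by simp [Finset.sum_const, mul_comm]
  have hEnt := maxEnt p (fun x => (hpsd x.1).eigenvalues_nonneg x.2) hsum1 (k * M) hsupp
  have hL : ∑ i, vnEntropy (D' i) = -∑ x, p x * Real.log (p x) := by
    rw [← Finset.univ_sigma_univ, Finset.sum_sigma, ← Finset.sum_neg_distrib]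
    refine Finset.sum_congr rfl fun i _ => ?_
    rw [vnEntropy, dif_pos (hH i)]
  have hR : Real.log ((k * M : ℕ) : ℝ) = Real.log k + Real.log (M : ℝ) := by
    have hk0 : (k : ℝ) ≠ 0 := Nat.cast_ne_zero.mpr (by omega)
    have hM0 : (M : ℝ) ≠ 0 := Nat.cast_ne_zero.mpr (by omega)
    push_cast
    rw [Real.log_mul hk0 hM0]
  rw [hL, ← hR]
  exact hEnt
end

section
/- With the finitely correlated data (d, l, K_1,…,K_l, E, W), the purification operators K_{[0,n+1]}, β_0(W), the embeddings ι, ι', and the projections P_I as in the context, let n ≥ 1 and let I ∈ Σ^n (Σ = {1,…,d}×{1,…,l}) be a string such that p_I := Tr(K_{[0,n+1]} · ι(P_I) · β_0(W) · K_{[0,n+1]}*) > 0. Let D_I ∈ M_{d^n}(ℂ) be the density matrix determined by Tr(D_I · X) = (1/p_I) · Tr(K_{[0,n+1]} · ι(P_I) · β_0(W) · K_{[0,n+1]}* · ι'(X)) for all X ∈ M_d(ℂ)^{⊗n}. Then the von Neumann entropy of D_I satisfies S(D_I) ≤ 4·log d + log l. In particular, this bound is independent of n and of I. -/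
open Matrix
open scoped Kronecker ComplexOrder

/-- Partial trace over the second tensor factor of `M_d(ℂ) ⊗ M_d(ℂ)`. -/
noncomputable def ptrace2 (d : ℕ) (M : Matrix (Fin d × Fin d) (Fin d × Fin d) ℂ) :
    Matrix (Fin d) (Fin d) ℂ :=
  Matrix.of fun a b => ∑ j, M (a, j) (b, j)

/-- The completely positive map `E(A) = Tr⁽²⁾(∑ⱼ Kⱼ* A Kⱼ)` with Kraus operators `K`. -/
noncomputable def Emap (d l : ℕ) (K : Fin l → Matrix (Fin d × Fin d) (Fin d × Fin d) ℂ)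
    (A : Matrix (Fin d × Fin d) (Fin d × Fin d) ℂ) : Matrix (Fin d) (Fin d) ℂ :=
  ptrace2 d (∑ j, (K j)ᴴ * A * K j)

/-- Index set of the algebra `𝓑ₙ = M_d(ℂ)^{⊗(n+2)} ⊗ 𝓓^{⊗(n+1)}` (the abelian algebra `𝓓`,
diagonal in `M_l(ℂ)`, contributes diagonal indices `Fin l` at sites `0, …, n`; the
`M_d`-factors sit at sites `0, …, n+1`).  `𝓑ₙ` is realized inside the full matrix algebra
over this index set. -/
abbrev BIdx (d l n : ℕ) := (Fin (n + 2) → Fin d) × (Fin (n + 1) → Fin l)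

/-- `δᵢ(K)`: the element `K = ∑ⱼ Kⱼ ⊗ eⱼ ∈ M_d ⊗ 𝓓 ⊗ M_d` placed at `M_d`-sites `i, i+1`
and `𝓓`-site `i` of `𝓑ₙ`, tensored with the identity elsewhere. -/
noncomputable def deltaK (d l n : ℕ) (K : Fin l → Matrix (Fin d × Fin d) (Fin d × Fin d) ℂ)
    (i : Fin (n + 1)) : Matrix (BIdx d l n) (BIdx d l n) ℂ :=
  Matrix.of fun p q =>
    if p.2 = q.2 ∧ ∀ s, s ≠ i.castSucc → s ≠ i.succ → p.1 s = q.1 s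
    then K (p.2 i) (p.1 i.castSucc, p.1 i.succ) (q.1 i.castSucc, q.1 i.succ)
    else 0

/-- `K_{[0,n+1]} = δₙ(K) ⋅ δₙ₋₁(K) ⋯ δ₀(K)`. -/
noncomputable def Kchain (d l n : ℕ) (K : Fin l → Matrix (Fin d × Fin d) (Fin d × Fin d) ℂ) :
    Matrix (BIdx d l n) (BIdx d l n) ℂ :=
  ((List.ofFn fun i : Fin (n + 1) => deltaK d l n K i).reverse).prod

/-- `β₀(W)`: `W` at `M_d`-site `0` of `𝓑ₙ`, tensored with identities. -/
noncomputable def beta0 (d l n : ℕ) (W : Matrix (Fin d) (Fin d) ℂ) :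
    Matrix (BIdx d l n) (BIdx d l n) ℂ :=
  Matrix.of fun p q =>
    if p.2 = q.2 ∧ ∀ s : Fin (n + 2), s ≠ 0 → p.1 s = q.1 s
    then W (p.1 0) (q.1 0) else 0

/-- An element `X` of `(M_d(ℂ) ⊗ 𝓓)^{⊗n} ≅ ⊕_{b : Fin n → Fin l} M_{dⁿ}(ℂ)` is encoded as a
family of matrices `X b ∈ M_d(ℂ)^{⊗n}` indexed by the diagonal `𝓓^{⊗n}`-indices `b`.
`iota` is the embedding `ι : (M_d(ℂ) ⊗ 𝓓)^{⊗n} → 𝓑ₙ` placing the `i`-th tensor factor at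
`M_d`-site `i` and `𝓓`-site `i` (`1 ≤ i ≤ n`), with identity at `M_d`-sites `0, n+1` and at
`𝓓`-site `0`. -/
noncomputable def iota (d l n : ℕ)
    (X : (Fin n → Fin l) → Matrix (Fin n → Fin d) (Fin n → Fin d) ℂ) :
    Matrix (BIdx d l n) (BIdx d l n) ℂ :=
  Matrix.of fun p q =>
    if p.2 = q.2 ∧ p.1 0 = q.1 0 ∧ p.1 (Fin.last (n + 1)) = q.1 (Fin.last (n + 1))
    then X (fun i => p.2 i.succ) (fun i => p.1 i.succ.castSucc) (fun i => q.1 i.succ.castSucc)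
    else 0

/-- The embedding `ι' : M_d(ℂ)^{⊗n} → 𝓑ₙ` placing the `i`-th tensor factor at `M_d`-site `i`
(`1 ≤ i ≤ n`), with identity at `M_d`-sites `0, n+1` and at all `𝓓`-sites. -/
noncomputable def iota' (d l n : ℕ)
    (X : Matrix (Fin n → Fin d) (Fin n → Fin d) ℂ) :
    Matrix (BIdx d l n) (BIdx d l n) ℂ :=
  Matrix.of fun p q =>
    if p.2 = q.2 ∧ p.1 0 = q.1 0 ∧ p.1 (Fin.last (n + 1)) = q.1 (Fin.last (n + 1))
    then X (fun i => p.1 i.succ.castSucc) (fun i => q.1 i.succ.castSucc)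
    else 0

/-- The nested expression `Ē(A₁⊗D₁⊗Ē(A₂⊗D₂⊗⋯⊗Ē(Aₘ⊗Dₘ⊗1)⋯))`, extended linearly to all of
`(M_d(ℂ) ⊗ 𝓓)^{⊗m}`: here `Ē(A⊗eⱼ⊗B) = Tr⁽²⁾(Kⱼ*(A⊗B)Kⱼ)`, and the linear functional
`φ̄ₘ` of the paper is `X ↦ Tr(W ⋅ Phi d l K m X)`. -/
noncomputable def Phi (d l : ℕ) (K : Fin l → Matrix (Fin d × Fin d) (Fin d × Fin d) ℂ) :
    ∀ m : ℕ, ((Fin m → Fin l) → Matrix (Fin m → Fin d) (Fin m → Fin d) ℂ) →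
      Matrix (Fin d) (Fin d) ℂ
  | 0, X => X Fin.elim0 Fin.elim0 Fin.elim0 • 1
  | m + 1, X => ∑ j : Fin l, ptrace2 d ((K j)ᴴ *
      (Matrix.of fun u v : Fin d × Fin d =>
        Phi d l K m (fun w => Matrix.of fun x y =>
          X (Fin.cons j w) (Fin.cons u.1 x) (Fin.cons v.1 y)) u.2 v.2) * K j)

/-- The minimal projection `P_J = (p_{a₁}⊗e_{b₁})⊗⋯⊗(p_{aₘ}⊗e_{bₘ})` of `(M_d(ℂ)⊗𝓓)^{⊗m}`
associated with the string `J = ((a₁,b₁),…,(aₘ,bₘ))`, in the encoding of `iota`. -/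
noncomputable def PJ (d l m : ℕ) (p : Fin d → Matrix (Fin d) (Fin d) ℂ)
    (J : Fin m → Fin d × Fin l) :
    (Fin m → Fin l) → Matrix (Fin m → Fin d) (Fin m → Fin d) ℂ :=
  fun b => if b = fun i => (J i).2
    then Matrix.of fun x y => ∏ i, p (J i).1 (x i) (y i)
    else 0

namespace FCS

open Complex


open Complex

variable {d l n : ℕ}

lemma fin_cover (s : Fin (n + 2)) :
    s = 0 ∨ s = Fin.last (n + 1) ∨ ∃ i : Fin n, s = i.succ.castSucc := by
  rcases Fin.eq_zero_or_eq_succ s with h | ⟨t, rfl⟩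
  · exact Or.inl h
  · rcases Fin.eq_castSucc_or_eq_last t with ⟨i, rfl⟩ | rfl
    · exact Or.inr (Or.inr ⟨i, (Fin.succ_castSucc i).symm⟩)
    · exact Or.inr (Or.inl (Fin.succ_last n))

/-- Embedding of a middle configuration and an environment configuration. -/
def emb (d l n : ℕ) (x : Fin n → Fin d)
    (e : (Fin d × Fin d) × (Fin (n + 1) → Fin l)) : BIdx d l n :=
  (Fin.cons e.1.1 (Fin.snoc x e.1.2), e.2)

@[simp] lemma emb_snd (x : Fin n → Fin d) (e) : (emb d l n x e).2 = e.2 := rfl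

@[simp] lemma emb_zero (x : Fin n → Fin d) (e) : (emb d l n x e).1 0 = e.1.1 := by
  simp [emb]

@[simp] lemma emb_last (x : Fin n → Fin d) (e) :
    (emb d l n x e).1 (Fin.last (n + 1)) = e.1.2 := by
  simp [emb, ← Fin.succ_last]

@[simp] lemma emb_mid (x : Fin n → Fin d) (e) (i : Fin n) :
    (emb d l n x e).1 i.succ.castSucc = x i := by
  simp [emb, ← Fin.succ_castSucc]

@[simp] lemma emb_mid' (x : Fin n → Fin d) (e) (i : Fin n) :
    (emb d l n x e).1 i.castSucc.succ = x i := by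
  simp [emb]

/-- The corresponding equivalence of index sets. -/
def embEquiv (d l n : ℕ) :
    ((Fin n → Fin d) × ((Fin d × Fin d) × (Fin (n + 1) → Fin l))) ≃ BIdx d l n where
  toFun z := emb d l n z.1 z.2
  invFun q := (fun i => q.1 i.succ.castSucc, ((q.1 0, q.1 (Fin.last (n + 1))), q.2))
  left_inv z := by
    obtain ⟨x, ⟨⟨a, b⟩, m⟩⟩ := z
    refine Prod.ext (funext fun i => ?_) (Prod.ext (Prod.ext ?_ ?_) ?_) <;> simp
  right_inv q := by
    refine Prod.ext (funext fun s => ?_) rfl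
    rcases fin_cover s with rfl | rfl | ⟨i, rfl⟩ <;> simp

lemma matrix_eq_of_trace_mul_eq {N : Type*} [Fintype N] [DecidableEq N]
    {M M' : Matrix N N ℂ} (h : ∀ X : Matrix N N ℂ, (M * X).trace = (M' * X).trace) :
    M = M' := by
  ext a b
  have h2 := h (Matrix.single b a 1)
  simpa [Matrix.trace, Matrix.mul_apply, Matrix.single, Matrix.diag,
    Finset.sum_ite_eq, Finset.sum_ite_eq', ite_and] using h2

lemma rank_one_factor {d : ℕ} (P : Matrix (Fin d) (Fin d) ℂ)
    (hh : Pᴴ = P) (hi : P * P = P) (hr : P.rank = 1) :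
    ∃ v : Fin d → ℂ, ∀ x y, P x y = v x * star (v y) := by
  classical
  have hfr : Module.finrank ℂ ↥(LinearMap.range P.mulVecLin) = 1 := hr
  obtain ⟨u, hu0, hu⟩ := finrank_eq_one_iff'.mp hfr
  choose c hc using fun y =>
    hu ⟨P *ᵥ Pi.single y 1, LinearMap.mem_range_self _ _⟩
  have hfac : ∀ x y, P x y = c y * (u : (Fin d) → ℂ) x := by
    intro x y
    have h1 := congrFun (congrArg Subtype.val (hc y)) x
    simpa using h1.symm
  have hherm : ∀ x y, P x y = starRingEnd ℂ (P y x) := by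
    intro x y
    conv_lhs => rw [← hh]
    rfl
  have hP0 : P ≠ 0 := by
    rintro h0
    rw [h0] at hr
    simp at hr
  obtain ⟨x₀, y₀, hxy⟩ : ∃ x y, P x y ≠ 0 := by
    by_contra hc'
    push_neg at hc'
    exact hP0 (by ext x y; simpa using hc' x y)
  set T : ℝ := ∑ z, Complex.normSq (P y₀ z) with hT
  have hPyy : P y₀ y₀ = (T : ℂ) := by
    have h1 : P y₀ y₀ = (P * P) y₀ y₀ := by rw [hi]
    rw [h1, Matrix.mul_apply]
    rw [hT]
    push_cast
    refine Finset.sum_congr rfl fun z _ => ?_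
    rw [hherm z y₀, ← Complex.mul_conj]
  have hTpos : 0 < T := by
    rw [hT]
    refine Finset.sum_pos' (fun z _ => Complex.normSq_nonneg _) ⟨x₀, Finset.mem_univ _, ?_⟩
    have : P y₀ x₀ ≠ 0 := by
      rw [hherm y₀ x₀]
      simpa using hxy
    simpa [Complex.normSq_pos] using this
  have hTne : (T : ℂ) ≠ 0 := by exact_mod_cast hTpos.ne'
  refine ⟨fun x => P x y₀ / (Real.sqrt T : ℂ), fun x y => ?_⟩
  have hminor : P x y * P y₀ y₀ = P x y₀ * P y₀ y := by
    rw [hfac x y, hfac x y₀, hfac y₀ y, hfac y₀ y₀]; ring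
  have hs : ((Real.sqrt T : ℂ)) * ((Real.sqrt T : ℂ)) = (T : ℂ) := by
    rw [← Complex.ofReal_mul, Real.mul_self_sqrt hTpos.le]
  have hstar : star (P y y₀ / (Real.sqrt T : ℂ)) = P y₀ y / (Real.sqrt T : ℂ) := by
    rw [star_div₀]
    congr 1
    · rw [hherm y₀ y]; rfl
    · exact Complex.conj_ofReal _
  rw [hstar, div_mul_div_comm, hs]
  rw [eq_div_iff hTne, ← hPyy]
  rw [hminor]



lemma vnEntropy_le_log_card {N F : Type*} [Fintype N] [DecidableEq N] [Fintype F]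
    (D : Matrix N N ℂ) (B : Matrix N F ℂ) (hD : D = B * Bᴴ) (htr : D.trace = 1) :
    vnEntropy D ≤ Real.log (Fintype.card F) := by
  classical
  have hPSD : D.PosSemidef := hD ▸ Matrix.posSemidef_self_mul_conjTranspose B
  have hH : D.IsHermitian := hPSD.isHermitian
  rw [vnEntropy, dif_pos hH]
  have hnn : ∀ i, 0 ≤ hH.eigenvalues i := hPSD.eigenvalues_nonneg
  -- trace equals sum of eigenvalues
  have hsumC : (∑ i, (hH.eigenvalues i : ℂ)) = 1 := by
    have hU : star (hH.eigenvectorUnitary : Matrix N N ℂ) *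
        (hH.eigenvectorUnitary : Matrix N N ℂ) = 1 :=
      Matrix.mem_unitaryGroup_iff'.mp (hH.eigenvectorUnitary).2
    calc (∑ i, (hH.eigenvalues i : ℂ))
        = (Matrix.diagonal (RCLike.ofReal ∘ hH.eigenvalues) : Matrix N N ℂ).trace := by
          simp [Matrix.trace_diagonal]
      _ = ((hH.eigenvectorUnitary : Matrix N N ℂ) *
            Matrix.diagonal (RCLike.ofReal ∘ hH.eigenvalues) *
            star (hH.eigenvectorUnitary : Matrix N N ℂ)).trace := by
          rw [Matrix.trace_mul_comm, ← Matrix.mul_assoc, hU, Matrix.one_mul]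
      _ = D.trace := by rw [← Unitary.conjStarAlgAut_apply (S := ℂ), ← Matrix.IsHermitian.spectral_theorem hH]
      _ = 1 := htr
  have hsum : ∑ i, hH.eigenvalues i = 1 := by exact_mod_cast hsumC
  set t := Finset.univ.filter (fun i => hH.eigenvalues i ≠ 0) with ht
  have htsum : ∑ i ∈ t, hH.eigenvalues i = 1 := by
    rw [ht, Finset.sum_filter_ne_zero]; exact hsum
  have huniv : ∑ i, hH.eigenvalues i * Real.log (hH.eigenvalues i)
      = ∑ i ∈ t, hH.eigenvalues i * Real.log (hH.eigenvalues i) := by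
    refine (Finset.sum_filter_of_ne ?_).symm
    intro i _ hne h0
    exact hne (by rw [h0]; simp)
  have hjen := (strictConcaveOn_log_Ioi.concaveOn).le_map_sum
    (t := t) (w := hH.eigenvalues) (p := fun i => (hH.eigenvalues i)⁻¹)
    (fun i _ => hnn i) htsum
    (fun i hi => by
      have : hH.eigenvalues i ≠ 0 := (Finset.mem_filter.mp hi).2
      exact Set.mem_Ioi.mpr (inv_pos.mpr (lt_of_le_of_ne (hnn i) (Ne.symm this))))
  have hcardsum : ∑ i ∈ t, hH.eigenvalues i • (hH.eigenvalues i)⁻¹ = (t.card : ℝ) := by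
    rw [Finset.sum_congr rfl (fun i hi => by
      rw [smul_eq_mul, mul_inv_cancel₀ ((Finset.mem_filter.mp hi).2)])]
    simp
  rw [hcardsum] at hjen
  have hmain : -∑ i, hH.eigenvalues i * Real.log (hH.eigenvalues i)
      ≤ Real.log (t.card : ℝ) := by
    rw [huniv, ← Finset.sum_neg_distrib]
    calc ∑ i ∈ t, -(hH.eigenvalues i * Real.log (hH.eigenvalues i))
        = ∑ i ∈ t, hH.eigenvalues i • Real.log (hH.eigenvalues i)⁻¹ := by
          refine Finset.sum_congr rfl fun i hi => ?_
          rw [smul_eq_mul, Real.log_inv]; ring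
      _ ≤ Real.log (t.card : ℝ) := hjen
  have htpos : 0 < t.card := by
    rcases Finset.eq_empty_or_nonempty t with h | h
    · rw [h] at htsum; simp at htsum
    · exact Finset.card_pos.mpr h
  have hcardle : t.card ≤ Fintype.card F := by
    have h1 : t.card = D.rank := by
      rw [Matrix.IsHermitian.rank_eq_card_non_zero_eigs hH, Fintype.card_subtype]
    have h2 : D.rank ≤ Fintype.card F := by
      rw [hD]
      exact le_trans (Matrix.rank_mul_le_left B Bᴴ) (Matrix.rank_le_card_width B)
    omega
  refine hmain.trans (Real.log_le_log (by positivity) ?_)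
  exact_mod_cast hcardle



lemma star_prod_fin {n : ℕ} (f : Fin n → ℂ) : star (∏ i, f i) = ∏ i, star (f i) := by
  simpa using map_prod (starRingEnd ℂ) f Finset.univ

lemma iotaPJ_mul_beta {d l n : ℕ} (p : Fin d → Matrix (Fin d) (Fin d) ℂ)
    (I : Fin n → Fin d × Fin l) (W : Matrix (Fin d) (Fin d) ℂ)
    (v : Fin d → Fin d → ℂ) (hv : ∀ a x y, p a x y = v a x * star (v a y))
    (sq : Matrix (Fin d) (Fin d) ℂ) (hsq : ∀ a b, (∑ u, sq a u * star (sq b u)) = W a b)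
    (S : Matrix (BIdx d l n) (Fin d × Fin d × Fin l) ℂ)
    (hS : S = Matrix.of fun r f =>
      if r.2 = Fin.cons f.2.2 (fun i => (I i).2) ∧ r.1 (Fin.last (n + 1)) = f.2.1
      then sq (r.1 0) f.1 * ∏ i, v (I i).1 (r.1 i.succ.castSucc) else 0) :
    iota d l n (PJ d l n p I) * beta0 d l n W = S * Sᴴ := by
  classical
  ext pp qq
  rw [Matrix.mul_apply, Matrix.mul_apply]
  set r₀ : BIdx d l n := (Fin.cons (pp.1 0) (fun t => qq.1 t.succ), qq.2) with hr₀
  have hr₀0 : r₀.1 0 = pp.1 0 := by simp [hr₀]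
  have hr₀L : r₀.1 (Fin.last (n + 1)) = qq.1 (Fin.last (n + 1)) := by
    simp [hr₀, ← Fin.succ_last]
  have hr₀m : ∀ i : Fin n, r₀.1 i.succ.castSucc = qq.1 i.succ.castSucc := by
    intro i; simp [hr₀, ← Fin.succ_castSucc]
  -- collapse the LHS sum
  have hL : (∑ r, iota d l n (PJ d l n p I) pp r * beta0 d l n W r qq)
      = iota d l n (PJ d l n p I) pp r₀ * beta0 d l n W r₀ qq := by
    refine Fintype.sum_eq_single _ (fun r hr => ?_)
    by_cases hb : r.2 = qq.2 ∧ ∀ s : Fin (n + 2), s ≠ 0 → r.1 s = qq.1 s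
    · by_cases hi : pp.2 = r.2 ∧ pp.1 0 = r.1 0 ∧
          pp.1 (Fin.last (n + 1)) = r.1 (Fin.last (n + 1))
      · exfalso
        apply hr
        refine Prod.ext (funext fun s => ?_) hb.1
        rcases Fin.eq_zero_or_eq_succ s with rfl | ⟨t, rfl⟩
        · rw [← hi.2.1, hr₀]; simp
        · rw [hb.2 t.succ (Fin.succ_ne_zero t), hr₀]; simp
      · have h0 : iota d l n (PJ d l n p I) pp r = 0 := if_neg hi
        rw [h0, zero_mul]
    · have h0 : beta0 d l n W r qq = 0 := if_neg hb
      rw [h0, mul_zero]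
  rw [hL]
  have hbeta : beta0 d l n W r₀ qq = W (pp.1 0) (qq.1 0) := by
    rw [beta0, Matrix.of_apply, if_pos, hr₀0]
    refine ⟨rfl, fun s hs => ?_⟩
    obtain ⟨t, rfl⟩ := (Fin.eq_zero_or_eq_succ s).resolve_left hs
    simp [hr₀]
  rw [hbeta]
  -- collapse the RHS sum
  have hR : (∑ f, S pp f * Sᴴ f qq)
      = ∑ u : Fin d, S pp (u, pp.1 (Fin.last (n + 1)), pp.2 0)
          * star (S qq (u, pp.1 (Fin.last (n + 1)), pp.2 0)) := by
    simp only [Matrix.conjTranspose_apply]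
    rw [Fintype.sum_prod_type]
    refine Finset.sum_congr rfl fun u _ => ?_
    rw [Fintype.sum_prod_type]
    refine (Fintype.sum_eq_single (pp.1 (Fin.last (n + 1)))
      (fun w hw => Finset.sum_eq_zero fun j _ => ?_)).trans ?_
    · have h0 : S pp (u, w, j) = 0 := by
        rw [hS, Matrix.of_apply, if_neg]
        exact fun hc => hw hc.2.symm
      rw [h0, zero_mul]
    · refine Fintype.sum_eq_single (pp.2 0) (fun j hj => ?_)
      have h0 : S pp (u, pp.1 (Fin.last (n + 1)), j) = 0 := by
        rw [hS, Matrix.of_apply, if_neg]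
        rintro ⟨hc, -⟩
        exact hj (by rw [hc]; simp)
      rw [h0, zero_mul]
  rw [hR]
  -- case analysis on the common support condition
  by_cases hC : pp.2 = qq.2 ∧ pp.1 (Fin.last (n + 1)) = qq.1 (Fin.last (n + 1)) ∧
      (fun i => pp.2 i.succ) = (fun i => (I i).2)
  · obtain ⟨hC1, hC2, hC3⟩ := hC
    have hppcons : pp.2 = Fin.cons (pp.2 0) (fun i => (I i).2) := by
      funext t
      rcases Fin.eq_zero_or_eq_succ t with rfl | ⟨i, rfl⟩
      · simp
      · rw [Fin.cons_succ]; exact congrFun hC3 i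
    have hiota : iota d l n (PJ d l n p I) pp r₀
        = ∏ i, p (I i).1 (pp.1 i.succ.castSucc) (qq.1 i.succ.castSucc) := by
      rw [iota, Matrix.of_apply, if_pos ⟨hC1, hr₀0.symm, by rw [hr₀L]; exact hC2⟩]
      rw [PJ, if_pos hC3, Matrix.of_apply]
      exact Finset.prod_congr rfl fun i _ => by
        simp only [← Fin.succ_castSucc, Fin.cons_succ]
        exact congrArg _ (hr₀m i)
    rw [hiota]
    have hSp : ∀ u, S pp (u, pp.1 (Fin.last (n + 1)), pp.2 0)
        = sq (pp.1 0) u * ∏ i, v (I i).1 (pp.1 i.succ.castSucc) := by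
      intro u
      rw [hS, Matrix.of_apply, if_pos ⟨hppcons, rfl⟩]
    have hSq : ∀ u, S qq (u, pp.1 (Fin.last (n + 1)), pp.2 0)
        = sq (qq.1 0) u * ∏ i, v (I i).1 (qq.1 i.succ.castSucc) := by
      intro u
      rw [hS, Matrix.of_apply, if_pos ⟨by rw [← hC1]; exact hppcons, hC2.symm⟩]
    calc (∏ i, p (I i).1 (pp.1 i.succ.castSucc) (qq.1 i.succ.castSucc)) * W (pp.1 0) (qq.1 0)
        = (∏ i, v (I i).1 (pp.1 i.succ.castSucc) * star (v (I i).1 (qq.1 i.succ.castSucc)))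
            * ∑ u, sq (pp.1 0) u * star (sq (qq.1 0) u) := by
          rw [hsq]
          exact congrArg (· * W (pp.1 0) (qq.1 0))
            (Finset.prod_congr rfl fun i _ => hv _ _ _)
      _ = ∑ u, S pp (u, pp.1 (Fin.last (n + 1)), pp.2 0)
            * star (S qq (u, pp.1 (Fin.last (n + 1)), pp.2 0)) := by
          rw [Finset.mul_sum]
          refine Finset.sum_congr rfl fun u _ => ?_
          rw [hSp u, hSq u, star_mul', star_prod_fin, Finset.prod_mul_distrib]
          ring
  · have hiota0 : iota d l n (PJ d l n p I) pp r₀ * W (pp.1 0) (qq.1 0) = 0 := by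
      rw [iota, Matrix.of_apply]
      split_ifs with h1
      · rw [PJ]
        split_ifs with h2
        · exact absurd ⟨h1.1, h1.2.2.trans hr₀L, h2⟩ hC
        · simp
      · simp
    rw [hiota0]
    refine (Finset.sum_eq_zero fun u _ => ?_).symm
    by_cases h1 : pp.2 = Fin.cons (pp.2 0) (fun i => (I i).2)
    · by_cases h2 : qq.2 = Fin.cons (pp.2 0) (fun i => (I i).2) ∧
          qq.1 (Fin.last (n + 1)) = pp.1 (Fin.last (n + 1))
      · exfalso
        apply hC
        refine ⟨h1.trans h2.1.symm, h2.2.symm, funext fun i => ?_⟩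
        rw [congrFun h1 i.succ, Fin.cons_succ]
      · have h0 : S qq (u, pp.1 (Fin.last (n + 1)), pp.2 0) = 0 := by
          rw [hS, Matrix.of_apply, if_neg h2]
        rw [h0, star_zero, mul_zero]
    · have h0 : S pp (u, pp.1 (Fin.last (n + 1)), pp.2 0) = 0 := by
        rw [hS, Matrix.of_apply, if_neg fun hc => h1 hc.1]
      rw [h0, zero_mul]


lemma kchain_ddiag {d l n : ℕ} (K : Fin l → Matrix (Fin d × Fin d) (Fin d × Fin d) ℂ) :
    ∀ p q : BIdx d l n, p.2 ≠ q.2 → Kchain d l n K p q = 0 := by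
  classical
  have H : ∀ L : List (Matrix (BIdx d l n) (BIdx d l n) ℂ),
      (∀ M ∈ L, ∀ p q : BIdx d l n, p.2 ≠ q.2 → M p q = 0) →
      ∀ p q : BIdx d l n, p.2 ≠ q.2 → L.prod p q = 0 := by
    intro L
    induction L with
    | nil =>
      intro _ p q h
      simp only [List.prod_nil]
      exact Matrix.one_apply_ne (fun e => h (by rw [e]))
    | cons M L ih =>
      intro hM p q h
      rw [List.prod_cons, Matrix.mul_apply]
      refine Finset.sum_eq_zero fun r _ => ?_
      by_cases hr : p.2 = r.2
      · rw [ih (fun M' hM' => hM M' (List.mem_cons_of_mem _ hM')) r q (hr ▸ h), mul_zero]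
      · rw [hM M List.mem_cons_self p r hr, zero_mul]
  intro p q h
  refine H _ ?_ p q h
  intro M hM p' q' h'
  rw [List.mem_reverse, List.mem_ofFn] at hM
  obtain ⟨i, rfl⟩ := hM
  exact if_neg (fun hc => h' hc.1)

lemma iota'_one {d l n : ℕ} : iota' d l n 1 = 1 := by
  classical
  ext p q
  show (if _ then _ else _) = _
  by_cases h : p = q
  · subst h
    rw [if_pos ⟨rfl, rfl, rfl⟩, Matrix.one_apply_eq, Matrix.one_apply_eq]
  · rw [Matrix.one_apply_ne h]
    split_ifs with hc
    · obtain ⟨h1, h2, h3⟩ := hc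
      refine Matrix.one_apply_ne fun hmid => ?_
      apply h
      refine Prod.ext (funext fun s => ?_) h1
      rcases fin_cover s with rfl | rfl | ⟨i, rfl⟩
      · exact h2
      · exact h3
      · exact congrFun hmid i
    · rfl
lemma trace_mul_eq_sum {N : Type*} [Fintype N] (M X : Matrix N N ℂ) :
    (M * X).trace = ∑ x, ∑ y, M x y * X y x := by
  simp [Matrix.trace, Matrix.diag, Matrix.mul_apply]

lemma trace_mul_iota' (R : Matrix (BIdx d l n) (BIdx d l n) ℂ)
    (X : Matrix (Fin n → Fin d) (Fin n → Fin d) ℂ) :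
    (R * iota' d l n X).trace
      = ∑ x, ∑ y, (∑ e, R (emb d l n x e) (emb d l n y e)) * X y x := by
  classical
  have hii : ∀ (x y : Fin n → Fin d) e e',
      iota' d l n X (emb d l n y e') (emb d l n x e)
        = if e' = e then X y x else 0 := by
    intro x y e e'
    by_cases h : e' = e
    · subst h
      rw [iota', Matrix.of_apply, if_pos ⟨rfl, by simp, by simp⟩, if_pos rfl]
      congr 1 <;> funext i <;> simp
    · rw [iota', Matrix.of_apply, if_neg, if_neg h]
      rintro ⟨h1, h2, h3⟩
      simp only [emb_snd, emb_zero, emb_last] at h1 h2 h3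
      exact h (Prod.ext (Prod.ext h2 h3) h1)
  calc (R * iota' d l n X).trace
      = ∑ pq : BIdx d l n, ∑ q, R pq q * iota' d l n X q pq := trace_mul_eq_sum _ _
    _ = ∑ z : (Fin n → Fin d) × ((Fin d × Fin d) × (Fin (n + 1) → Fin l)),
          ∑ q, R (emb d l n z.1 z.2) q * iota' d l n X q (emb d l n z.1 z.2) := by
        rw [← Equiv.sum_comp (embEquiv d l n)
          (fun pq => ∑ q, R pq q * iota' d l n X q pq)]
        rfl
    _ = ∑ x, ∑ e, ∑ w : (Fin n → Fin d) × ((Fin d × Fin d) × (Fin (n + 1) → Fin l)),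
          R (emb d l n x e) (emb d l n w.1 w.2)
            * iota' d l n X (emb d l n w.1 w.2) (emb d l n x e) := by
        rw [Fintype.sum_prod_type]
        refine Finset.sum_congr rfl fun x _ => Finset.sum_congr rfl fun e _ => ?_
        rw [← Equiv.sum_comp (embEquiv d l n)
          (fun q => R (emb d l n x e) q * iota' d l n X q (emb d l n x e))]
        rfl
    _ = ∑ x, ∑ e, ∑ y, R (emb d l n x e) (emb d l n y e) * X y x := by
        refine Finset.sum_congr rfl fun x _ => Finset.sum_congr rfl fun e _ => ?_
        rw [Fintype.sum_prod_type]
        refine Finset.sum_congr rfl fun y _ => ?_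
        simp only [hii, mul_ite, mul_zero]
        rw [Finset.sum_ite_eq' Finset.univ e]
        simp
    _ = ∑ x, ∑ y, (∑ e, R (emb d l n x e) (emb d l n y e)) * X y x := by
        refine Finset.sum_congr rfl fun x _ => ?_
        rw [Finset.sum_comm]
        refine Finset.sum_congr rfl fun y _ => ?_
        rw [Finset.sum_mul]


end FCS

set_option maxHeartbeats 1600000 in
/-- If `p_I = Tr(K_{[0,n+1]} ι(P_I) β₀(W) K_{[0,n+1]}*) > 0` and `D_I` is the
density matrix of the normalized functional `X ↦ p_I⁻¹ Tr(K_{[0,n+1]} ι(P_I) β₀(W) K_{[0,n+1]}* ι'(X))`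
on `M_{dⁿ}(ℂ)`, then `S(D_I) ≤ 4 log d + log l`, a bound independent of `n` and `I`. -/
theorem stmt7 (d l : ℕ) (hd : 1 ≤ d) (hl : 1 ≤ l)
    (K : Fin l → Matrix (Fin d × Fin d) (Fin d × Fin d) ℂ)
    (hunital : Emap d l K 1 = 1)
    (W : Matrix (Fin d) (Fin d) ℂ) (hW : W.PosSemidef) (hWtr : W.trace = 1)
    (hinvW : ∀ C : Matrix (Fin d) (Fin d) ℂ,
      (W * Emap d l K ((1 : Matrix (Fin d) (Fin d) ℂ) ⊗ₖ C)).trace = (W * C).trace)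
    (p : Fin d → Matrix (Fin d) (Fin d) ℂ)
    (hpherm : ∀ a, (p a)ᴴ = p a) (hpidem : ∀ a, p a * p a = p a)
    (hprank : ∀ a, (p a).rank = 1)
    (hporth : ∀ a b, a ≠ b → p a * p b = 0)
    (hpsum : ∑ a, p a = 1)
    (n : ℕ) (hn : 1 ≤ n) (I : Fin n → Fin d × Fin l)
    (pI : ℝ) (hpIpos : 0 < pI)
    (hpI : (Kchain d l n K * iota d l n (PJ d l n p I) * beta0 d l n W *
      (Kchain d l n K)ᴴ).trace = (pI : ℂ))
    (DI : Matrix (Fin n → Fin d) (Fin n → Fin d) ℂ)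
    (hDI : ∀ X : Matrix (Fin n → Fin d) (Fin n → Fin d) ℂ,
      (DI * X).trace = (1 / pI : ℂ) *
        (Kchain d l n K * iota d l n (PJ d l n p I) * beta0 d l n W *
          (Kchain d l n K)ᴴ * iota' d l n X).trace) :
    vnEntropy DI ≤ 4 * Real.log d + Real.log l := by
  classical
  -- rank-one vectors for the projections
  choose v hv using fun a => FCS.rank_one_factor (p a) (hpherm a) (hpidem a) (hprank a)
  -- square root of W
  open scoped MatrixOrder in
  set sq := CFC.sqrt W with hsqdef
  have hsqH : sqᴴ = sq := by
    open scoped MatrixOrder in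
    exact (Matrix.nonneg_iff_posSemidef.mp (CFC.sqrt_nonneg W)).isHermitian
  have hsqW : ∀ a b, (∑ u, sq a u * star (sq b u)) = W a b := by
    intro a b
    have h1 : (sq * sq) a b = W a b := by
      open scoped MatrixOrder in
      rw [CFC.sqrt_mul_sqrt_self W (Matrix.nonneg_iff_posSemidef.mpr hW)]
    rw [← h1, Matrix.mul_apply]
    refine Finset.sum_congr rfl fun u _ => ?_
    congr 1
    rw [← Matrix.conjTranspose_apply, hsqH]
  -- the factor S with ι(P_I)·β₀(W) = S Sᴴ
  obtain ⟨S, hSdef⟩ : ∃ S : Matrix (BIdx d l n) (Fin d × Fin d × Fin l) ℂ,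
      S = Matrix.of fun r f =>
        if r.2 = Fin.cons f.2.2 (fun i => (I i).2) ∧ r.1 (Fin.last (n + 1)) = f.2.1
        then sq (r.1 0) f.1 * ∏ i, v (I i).1 (r.1 i.succ.castSucc) else 0 := ⟨_, rfl⟩
  have hG1 : iota d l n (PJ d l n p I) * beta0 d l n W = S * Sᴴ :=
    FCS.iotaPJ_mul_beta p I W v hv sq hsqW S hSdef
  obtain ⟨A, hAdef⟩ : ∃ A : Matrix (BIdx d l n) (Fin d × Fin d × Fin l) ℂ,
      A = Kchain d l n K * S := ⟨_, rfl⟩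
  have hRA : Kchain d l n K * iota d l n (PJ d l n p I) * beta0 d l n W * (Kchain d l n K)ᴴ
      = A * Aᴴ := by
    rw [hAdef, Matrix.conjTranspose_mul,
      Matrix.mul_assoc (Kchain d l n K) (iota d l n (PJ d l n p I)) (beta0 d l n W), hG1]
    simp only [Matrix.mul_assoc]
  have hAsupp : ∀ (pp : BIdx d l n) (f : Fin d × Fin d × Fin l),
      pp.2 ≠ Fin.cons f.2.2 (fun i => (I i).2) → A pp f = 0 := by
    intro pp f h
    rw [hAdef, Matrix.mul_apply]
    refine Finset.sum_eq_zero fun r _ => ?_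
    by_cases hr : pp.2 = r.2
    · have h0 : S r f = 0 := by
        rw [hSdef, Matrix.of_apply, if_neg]
        exact fun hc => h (by rw [hr]; exact hc.1)
      rw [h0, mul_zero]
    · rw [FCS.kchain_ddiag K pp r hr, zero_mul]
  -- numerical preliminaries
  have hpine : (pI : ℂ) ≠ 0 := by
    exact_mod_cast (Complex.ofReal_ne_zero).mpr hpIpos.ne'
  have hstarσ : star ((((Real.sqrt pI : ℝ)) : ℂ))⁻¹ = (((Real.sqrt pI : ℝ)) : ℂ)⁻¹ := by
    rw [star_inv₀, Complex.star_def, Complex.conj_ofReal]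
  have hps : (pI : ℂ) * ((((Real.sqrt pI : ℝ)) : ℂ)⁻¹ * (((Real.sqrt pI : ℝ)) : ℂ)⁻¹) = 1 := by
    rw [← mul_inv, ← Complex.ofReal_mul, Real.mul_self_sqrt hpIpos.le,
      mul_inv_cancel₀ hpine]
  -- the purifying matrix B
  obtain ⟨B, hBdef⟩ : ∃ B : Matrix (Fin n → Fin d) ((Fin d × Fin d) × (Fin d × Fin d × Fin l)) ℂ,
      B = Matrix.of fun x g => (((Real.sqrt pI : ℝ)) : ℂ)⁻¹ *
        A (FCS.emb d l n x (g.1, Fin.cons g.2.2.2 (fun i => (I i).2))) g.2 := ⟨_, rfl⟩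
  have hTB : ∀ x y, (∑ e : (Fin d × Fin d) × (Fin (n + 1) → Fin l),
      (A * Aᴴ) (FCS.emb d l n x e) (FCS.emb d l n y e)) = (pI : ℂ) * (B * Bᴴ) x y := by
    intro x y
    have hc : ∀ cw : Fin d × Fin d,
        (∑ m : Fin (n + 1) → Fin l, ∑ f : Fin d × Fin d × Fin l,
          A (FCS.emb d l n x (cw, m)) f * star (A (FCS.emb d l n y (cw, m)) f))
        = ∑ f : Fin d × Fin d × Fin l,
            A (FCS.emb d l n x (cw, Fin.cons f.2.2 (fun i => (I i).2))) f
            * star (A (FCS.emb d l n y (cw, Fin.cons f.2.2 (fun i => (I i).2))) f) := by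
      intro cw
      rw [Finset.sum_comm]
      refine Finset.sum_congr rfl fun f _ => ?_
      exact Fintype.sum_eq_single _ (fun m hm => by
        rw [hAsupp (FCS.emb d l n x (cw, m)) f hm, zero_mul])
    calc (∑ e : (Fin d × Fin d) × (Fin (n + 1) → Fin l),
          (A * Aᴴ) (FCS.emb d l n x e) (FCS.emb d l n y e))
        = ∑ cw : Fin d × Fin d, ∑ m : Fin (n + 1) → Fin l, ∑ f : Fin d × Fin d × Fin l,
            A (FCS.emb d l n x (cw, m)) f * star (A (FCS.emb d l n y (cw, m)) f) := by
          simp only [Matrix.mul_apply, Matrix.conjTranspose_apply]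
          exact Fintype.sum_prod_type (fun e : (Fin d × Fin d) × (Fin (n + 1) → Fin l) =>
            ∑ f : Fin d × Fin d × Fin l,
              A (FCS.emb d l n x e) f * star (A (FCS.emb d l n y e) f))
      _ = ∑ cw : Fin d × Fin d, ∑ f : Fin d × Fin d × Fin l,
            A (FCS.emb d l n x (cw, Fin.cons f.2.2 (fun i => (I i).2))) f
            * star (A (FCS.emb d l n y (cw, Fin.cons f.2.2 (fun i => (I i).2))) f) :=
          Finset.sum_congr rfl fun cw _ => hc cw
      _ = ∑ z : (Fin d × Fin d) × (Fin d × Fin d × Fin l),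
            A (FCS.emb d l n x (z.1, Fin.cons z.2.2.2 (fun i => (I i).2))) z.2
            * star (A (FCS.emb d l n y (z.1, Fin.cons z.2.2.2 (fun i => (I i).2))) z.2) :=
          (Fintype.sum_prod_type (fun z : (Fin d × Fin d) × (Fin d × Fin d × Fin l) =>
            A (FCS.emb d l n x (z.1, Fin.cons z.2.2.2 (fun i => (I i).2))) z.2
            * star (A (FCS.emb d l n y (z.1, Fin.cons z.2.2.2 (fun i => (I i).2))) z.2))).symm
      _ = (pI : ℂ) * (B * Bᴴ) x y := by
          simp only [Matrix.mul_apply, Matrix.conjTranspose_apply]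
          rw [Finset.mul_sum]
          refine Finset.sum_congr rfl fun z _ => ?_
          rw [hBdef]
          simp only [Matrix.of_apply]
          rw [star_mul', hstarσ]
          calc A (FCS.emb d l n x (z.1, Fin.cons z.2.2.2 fun i => (I i).2)) z.2
                * star (A (FCS.emb d l n y (z.1, Fin.cons z.2.2.2 fun i => (I i).2)) z.2)
              = ((pI : ℂ) * ((((Real.sqrt pI : ℝ)) : ℂ)⁻¹ * (((Real.sqrt pI : ℝ)) : ℂ)⁻¹))
                * (A (FCS.emb d l n x (z.1, Fin.cons z.2.2.2 fun i => (I i).2)) z.2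
                * star (A (FCS.emb d l n y (z.1, Fin.cons z.2.2.2 fun i => (I i).2)) z.2)) := by
                rw [hps, one_mul]
            _ = (pI : ℂ) * ((((Real.sqrt pI : ℝ)) : ℂ)⁻¹
                  * A (FCS.emb d l n x (z.1, Fin.cons z.2.2.2 fun i => (I i).2)) z.2
                  * ((((Real.sqrt pI : ℝ)) : ℂ)⁻¹
                    * star (A (FCS.emb d l n y (z.1, Fin.cons z.2.2.2 fun i => (I i).2)) z.2))) := by
                ring
  -- DI equals B Bᴴ
  have hkey : ∀ X : Matrix (Fin n → Fin d) (Fin n → Fin d) ℂ,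
      (DI * X).trace = ((B * Bᴴ) * X).trace := by
    intro X
    have h := hDI X
    rw [hRA, FCS.trace_mul_iota' (A * Aᴴ) X] at h
    simp only [hTB] at h
    rw [h, FCS.trace_mul_eq_sum, Finset.mul_sum]
    refine Finset.sum_congr rfl fun x _ => ?_
    rw [Finset.mul_sum]
    refine Finset.sum_congr rfl fun y _ => ?_
    rw [one_div]
    calc (pI : ℂ)⁻¹ * ((pI : ℂ) * (B * Bᴴ) x y * X y x)
        = ((pI : ℂ)⁻¹ * (pI : ℂ)) * ((B * Bᴴ) x y * X y x) := by ring
      _ = (B * Bᴴ) x y * X y x := by rw [inv_mul_cancel₀ hpine, one_mul]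
  have hDIB : DI = B * Bᴴ := FCS.matrix_eq_of_trace_mul_eq hkey
  have htr1 : DI.trace = 1 := by
    have h := hDI 1
    rw [Matrix.mul_one, FCS.iota'_one, Matrix.mul_one, hpI] at h
    rw [h, one_div, inv_mul_cancel₀ hpine]
  -- conclude
  have hfin := FCS.vnEntropy_le_log_card DI B hDIB htr1
  refine le_trans hfin ?_
  have hd0 : (0 : ℝ) < (d : ℝ) := by exact_mod_cast Nat.lt_of_lt_of_le Nat.zero_lt_one hd
  have hl0 : (0 : ℝ) < (l : ℝ) := by exact_mod_cast Nat.lt_of_lt_of_le Nat.zero_lt_one hl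
  have hcard : ((Fintype.card ((Fin d × Fin d) × (Fin d × Fin d × Fin l)) : ℕ) : ℝ)
      = (d : ℝ) ^ 4 * (l : ℝ) := by
    simp only [Fintype.card_prod, Fintype.card_fin]
    push_cast
    ring
  rw [hcard, Real.log_mul (by positivity) hl0.ne', Real.log_pow]
  norm_num
end

section
/- With the finitely correlated data (d, l, K_1,…,K_l, E, W), the functionals φ̄_m, the projections P_J, and the numbers p_J = φ̄_m(P_J) as in the context, the family (p_J) indexed by finite strings J over the alphabet Σ = {1,…,d}×{1,…,l} is a shift-consistent stochastic process: (i) p_J ≥ 0 for every string J; (ii) ∑_{J ∈ Σ^m} p_J = 1 for every m ≥ 1; (iii) for every string J and every s ∈ Σ, writing Js and sJ for the concatenations, one has ∑_{s ∈ Σ} p_{Js} = p_J and ∑_{s ∈ Σ} p_{sJ} = p_J. -/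
open Matrix
open scoped Kronecker ComplexOrder

namespace Stmt8Aux

/-- generic partial trace over the second factor -/
noncomputable def ptr {α : Type*} [Fintype α] (d : ℕ)
    (M : Matrix (α × Fin d) (α × Fin d) ℂ) : Matrix α α ℂ :=
  Matrix.of fun a b => ∑ t, M (a, t) (b, t)

lemma ptrace2_eq_ptr (d : ℕ) (M : Matrix (Fin d × Fin d) (Fin d × Fin d) ℂ) :
    ptrace2 d M = ptr d M := rfl

lemma ptr_sum {α : Type*} [Fintype α] (d : ℕ) {ι : Type*} (s : Finset ι)
    (f : ι → Matrix (α × Fin d) (α × Fin d) ℂ) :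
    ptr d (∑ i ∈ s, f i) = ∑ i ∈ s, ptr d (f i) := by
  ext a b
  simp only [ptr, Matrix.of_apply, Matrix.sum_apply]
  exact Finset.sum_comm

lemma ptr_smul {α : Type*} [Fintype α] (d : ℕ) (c : ℂ)
    (M : Matrix (α × Fin d) (α × Fin d) ℂ) :
    ptr d (c • M) = c • ptr d M := by
  ext a b
  simp [ptr, Finset.mul_sum]

lemma posSemidef_sum {ι n : Type*} [Fintype n] (s : Finset ι) (f : ι → Matrix n n ℂ)
    (h : ∀ i ∈ s, (f i).PosSemidef) : (∑ i ∈ s, f i).PosSemidef := by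
  classical
  induction s using Finset.induction with
  | empty => simpa using Matrix.PosSemidef.zero
  | insert _ _ hx ih =>
    rw [Finset.sum_insert hx]
    exact ((h _ (Finset.mem_insert_self _ _)).add
      (ih fun i hi => h i (Finset.mem_insert_of_mem hi)))

lemma ptr_posSemidef {α : Type*} [Fintype α] [DecidableEq α] (d : ℕ)
    {M : Matrix (α × Fin d) (α × Fin d) ℂ} (hM : M.PosSemidef) :
    (ptr d M).PosSemidef := by
  have key : ptr d M = ∑ t : Fin d,
      (Matrix.of fun (p : α × Fin d) (a : α) => if p = (a, t) then (1 : ℂ) else 0)ᴴ * M *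
      (Matrix.of fun (p : α × Fin d) (a : α) => if p = (a, t) then (1 : ℂ) else 0) := by
    ext a b
    simp only [Matrix.sum_apply, ptr, Matrix.of_apply, Matrix.mul_apply,
      Matrix.conjTranspose_apply, Matrix.of_apply]
    refine Finset.sum_congr rfl fun t _ => ?_
    simp [apply_ite (star : ℂ → ℂ), Finset.sum_ite_eq', Finset.mul_sum, Finset.sum_mul]
  rw [key]
  exact posSemidef_sum _ _ fun t _ => hM.conjTranspose_mul_mul_same _

lemma posSemidef_trace_nonneg {n : Type*} [Fintype n] [DecidableEq n]
    {A : Matrix n n ℂ} (hA : A.PosSemidef) : 0 ≤ A.trace := by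
  refine Finset.sum_nonneg fun i _ => ?_
  exact hA.diag_nonneg

open scoped MatrixOrder in
lemma exists_eq_ct_mul {n : Type*} [Fintype n] [DecidableEq n] {A : Matrix n n ℂ}
    (hA : A.PosSemidef) : ∃ B : Matrix n n ℂ, A = Bᴴ * B := by
  obtain ⟨X, hX, -, h⟩ :=
    CFC.exists_sqrt_of_isSelfAdjoint_of_quasispectrumRestricts hA.isHermitian
      (QuasispectrumRestricts.nnreal_of_nonneg hA.nonneg)
  refine ⟨X, ?_⟩
  rw [← h]
  rw [show Xᴴ = X from hX.star_eq]

lemma trace_mul_nonneg {n : Type*} [Fintype n] [DecidableEq n]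
    {W A : Matrix n n ℂ} (hW : W.PosSemidef) (hA : A.PosSemidef) :
    0 ≤ (W * A).trace := by
  obtain ⟨B, rfl⟩ := exists_eq_ct_mul hW
  have : (Bᴴ * B * A).trace = ((Bᴴ)ᴴ * A * Bᴴ).trace := by
    rw [conjTranspose_conjTranspose, Matrix.mul_assoc, Matrix.trace_mul_comm, Matrix.mul_assoc]
  rw [this]
  exact posSemidef_trace_nonneg (hA.conjTranspose_mul_mul_same _)

end Stmt8Aux

namespace Stmt8Aux

lemma ptrace2_sum (d : ℕ) {ι : Type*} (s : Finset ι)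
    (f : ι → Matrix (Fin d × Fin d) (Fin d × Fin d) ℂ) :
    ptrace2 d (∑ i ∈ s, f i) = ∑ i ∈ s, ptrace2 d (f i) := by
  ext a b
  simp only [ptrace2, Matrix.of_apply, Matrix.sum_apply]
  exact Finset.sum_comm

lemma ptrace2_smul (d : ℕ) (c : ℂ) (M : Matrix (Fin d × Fin d) (Fin d × Fin d) ℂ) :
    ptrace2 d (c • M) = c • ptrace2 d M := by
  ext a b
  simp [ptrace2, Finset.mul_sum]

lemma Emap_eq (d l : ℕ) (K : Fin l → Matrix (Fin d × Fin d) (Fin d × Fin d) ℂ)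
    (A : Matrix (Fin d × Fin d) (Fin d × Fin d) ℂ) :
    Emap d l K A = ∑ j, ptrace2 d ((K j)ᴴ * A * K j) := by
  rw [Emap, ptrace2_sum]

lemma Phi_lincomb (d l : ℕ) (K : Fin l → Matrix (Fin d × Fin d) (Fin d × Fin d) ℂ)
    {ι : Type*} [Fintype ι] :
    ∀ (m : ℕ) (c : ι → ℂ)
      (X : ι → ((Fin m → Fin l) → Matrix (Fin m → Fin d) (Fin m → Fin d) ℂ)),
      Phi d l K m (fun b => ∑ i, c i • X i b) = ∑ i, c i • Phi d l K m (X i) := by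
  intro m
  induction m with
  | zero =>
    intro c X
    simp [Phi, Matrix.sum_apply, Matrix.smul_apply, Finset.sum_smul, smul_smul]
  | succ m ih =>
    intro c X
    show (∑ j : Fin l, ptrace2 d ((K j)ᴴ *
      (Matrix.of fun u v : Fin d × Fin d =>
        Phi d l K m (fun w => Matrix.of fun x y =>
          (fun b => ∑ i, c i • X i b) (Fin.cons j w) (Fin.cons u.1 x) (Fin.cons v.1 y))
          u.2 v.2) * K j)) = _
    have hM : ∀ j : Fin l, (Matrix.of fun u v : Fin d × Fin d =>
        Phi d l K m (fun w => Matrix.of fun x y =>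
          (fun b => ∑ i, c i • X i b) (Fin.cons j w) (Fin.cons u.1 x) (Fin.cons v.1 y))
          u.2 v.2)
        = ∑ i, c i • (Matrix.of fun u v : Fin d × Fin d =>
            Phi d l K m (fun w => Matrix.of fun x y =>
              X i (Fin.cons j w) (Fin.cons u.1 x) (Fin.cons v.1 y)) u.2 v.2) := by
      intro j
      ext u v
      have hfam : (fun w => Matrix.of fun x y =>
          (fun b => ∑ i, c i • X i b) (Fin.cons j w) (Fin.cons u.1 x) (Fin.cons v.1 y))
          = fun w => ∑ i, c i • (Matrix.of fun x y =>
              X i (Fin.cons j w) (Fin.cons u.1 x) (Fin.cons v.1 y)) := by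
        funext w
        ext x y
        simp [Matrix.sum_apply, Matrix.smul_apply]
      simp only [Matrix.of_apply]
      rw [hfam, ih]
      simp [Matrix.sum_apply, Matrix.smul_apply]
    calc (∑ j : Fin l, ptrace2 d ((K j)ᴴ *
        (Matrix.of fun u v : Fin d × Fin d =>
          Phi d l K m (fun w => Matrix.of fun x y =>
            (fun b => ∑ i, c i • X i b) (Fin.cons j w) (Fin.cons u.1 x) (Fin.cons v.1 y))
            u.2 v.2) * K j))
        = ∑ j : Fin l, ∑ i, c i • ptrace2 d ((K j)ᴴ *
            (Matrix.of fun u v : Fin d × Fin d =>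
              Phi d l K m (fun w => Matrix.of fun x y =>
                X i (Fin.cons j w) (Fin.cons u.1 x) (Fin.cons v.1 y)) u.2 v.2) * K j) := by
          refine Finset.sum_congr rfl fun j _ => ?_
          rw [hM j, Finset.mul_sum, Finset.sum_mul, ptrace2_sum]
          refine Finset.sum_congr rfl fun i _ => ?_
          rw [mul_smul_comm, smul_mul_assoc, ptrace2_smul]
      _ = ∑ i, c i • Phi d l K (m + 1) (X i) := by
          rw [Finset.sum_comm]
          refine Finset.sum_congr rfl fun i _ => ?_
          rw [← Finset.smul_sum]
          rfl

lemma Phi_sum (d l : ℕ) (K : Fin l → Matrix (Fin d × Fin d) (Fin d × Fin d) ℂ)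
    {ι : Type*} [Fintype ι] (m : ℕ)
    (X : ι → ((Fin m → Fin l) → Matrix (Fin m → Fin d) (Fin m → Fin d) ℂ)) :
    Phi d l K m (fun b => ∑ i, X i b) = ∑ i, Phi d l K m (X i) := by
  have := Phi_lincomb d l K m (fun _ : ι => (1 : ℂ)) X
  simpa using this

end Stmt8Aux

namespace Stmt8Aux

lemma one_apply_prod {d : ℕ} (u v : Fin d × Fin d) :
    (1 : Matrix (Fin d × Fin d) (Fin d × Fin d) ℂ) u v
      = (if u.1 = v.1 then (1:ℂ) else 0) * (if u.2 = v.2 then (1:ℂ) else 0) := by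
  rw [Matrix.one_apply]
  by_cases h : u = v
  · simp [h]
  · rw [if_neg h]
    rcases u with ⟨u1, u2⟩; rcases v with ⟨v1, v2⟩
    simp only [Prod.mk.injEq] at h
    by_cases h1 : u1 = v1
    · simp [h1] at h ⊢
      simp [h]
    · simp [h1]

lemma Phi_one (d l : ℕ) (K : Fin l → Matrix (Fin d × Fin d) (Fin d × Fin d) ℂ)
    (hunital : Emap d l K 1 = 1) :
    ∀ m : ℕ, Phi d l K m (fun _ => 1) = 1 := by
  intro m
  induction m with
  | zero =>
    show (1 : Matrix (Fin 0 → Fin d) (Fin 0 → Fin d) ℂ) Fin.elim0 Fin.elim0 • 1 = 1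
    rw [Matrix.one_apply_eq, one_smul]
  | succ m ih =>
    show (∑ j : Fin l, ptrace2 d ((K j)ᴴ *
      (Matrix.of fun u v : Fin d × Fin d =>
        Phi d l K m (fun w => Matrix.of fun x y =>
          (1 : Matrix (Fin (m+1) → Fin d) (Fin (m+1) → Fin d) ℂ)
            (Fin.cons u.1 x) (Fin.cons v.1 y)) u.2 v.2) * K j)) = 1
    have hM : (Matrix.of fun u v : Fin d × Fin d =>
        Phi d l K m (fun w : Fin m → Fin l => Matrix.of fun x y =>
          (1 : Matrix (Fin (m+1) → Fin d) (Fin (m+1) → Fin d) ℂ)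
            (Fin.cons u.1 x) (Fin.cons v.1 y)) u.2 v.2)
        = (1 : Matrix (Fin d × Fin d) (Fin d × Fin d) ℂ) := by
      ext u v
      have hfam : (fun w : Fin m → Fin l => Matrix.of fun x y =>
          (1 : Matrix (Fin (m+1) → Fin d) (Fin (m+1) → Fin d) ℂ)
            (Fin.cons u.1 x) (Fin.cons v.1 y))
          = fun w : Fin m → Fin l => ∑ i : Unit,
              (if u.1 = v.1 then (1:ℂ) else 0) •
                (fun _ : Fin m → Fin l =>
                  (1 : Matrix (Fin m → Fin d) (Fin m → Fin d) ℂ)) w := by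
        funext w
        ext x y
        simp only [Matrix.of_apply, Matrix.one_apply, Fin.cons_inj,
          Finset.sum_const, Finset.card_univ, Fintype.card_unit, one_smul,
          Matrix.smul_apply, smul_eq_mul]
        split_ifs with h1 h2 h3 h4 <;> simp_all
      simp only [Matrix.of_apply]
      rw [hfam, Phi_lincomb, ih]
      simp only [one_apply_prod, Matrix.of_apply]
      simp only [Finset.sum_const, Finset.card_univ, Fintype.card_unit, one_smul]
      split_ifs <;> simp_all [Matrix.one_apply]
    rw [hM]
    have : ∀ j : Fin l, (K j)ᴴ * 1 * K j = (K j)ᴴ * (1:Matrix (Fin d × Fin d) (Fin d × Fin d) ℂ) * K j := fun _ => rfl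
    rw [← ptrace2_sum]
    exact hunital

end Stmt8Aux

namespace Stmt8Aux

noncomputable def ExtF (d l m : ℕ)
    (X : (Fin m → Fin l) → Matrix (Fin m → Fin d) (Fin m → Fin d) ℂ) :
    (Fin (m+1) → Fin l) → Matrix (Fin (m+1) → Fin d) (Fin (m+1) → Fin d) ℂ :=
  fun b => Matrix.of fun x y =>
    if x (Fin.last m) = y (Fin.last m)
    then X (fun i => b i.castSucc) (fun i => x i.castSucc) (fun i => y i.castSucc) else 0

lemma cons_castSucc {m : ℕ} {α : Type*} (j : α) (w : Fin (m+1) → α) :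
    (fun i : Fin (m+1) => (Fin.cons j w : Fin (m+2) → α) i.castSucc)
      = Fin.cons j (fun i : Fin m => w i.castSucc) := by
  funext i
  refine Fin.cases ?_ (fun i' => ?_) i
  · simp
  · rw [← Fin.succ_castSucc, Fin.cons_succ, Fin.cons_succ]

lemma cons_last {m : ℕ} {α : Type*} (j : α) (w : Fin (m+1) → α) :
    (Fin.cons j w : Fin (m+2) → α) (Fin.last (m+1)) = w (Fin.last m) := by
  rw [← Fin.succ_last, Fin.cons_succ]

lemma Phi_ext (d l : ℕ) (K : Fin l → Matrix (Fin d × Fin d) (Fin d × Fin d) ℂ)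
    (hunital : Emap d l K 1 = 1) :
    ∀ (m : ℕ) (X : (Fin m → Fin l) → Matrix (Fin m → Fin d) (Fin m → Fin d) ℂ),
      Phi d l K (m+1) (ExtF d l m X) = Phi d l K m X := by
  intro m
  induction m with
  | zero =>
    intro X
    have hM : ∀ j : Fin l, (Matrix.of fun u v : Fin d × Fin d =>
        Phi d l K 0 (fun w => Matrix.of fun x y =>
          ExtF d l 0 X (Fin.cons j w) (Fin.cons u.1 x) (Fin.cons v.1 y)) u.2 v.2)
        = (X Fin.elim0 Fin.elim0 Fin.elim0) •
            (1 : Matrix (Fin d × Fin d) (Fin d × Fin d) ℂ) := by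
      intro j
      ext u v
      simp only [Matrix.of_apply, Phi, Matrix.smul_apply, smul_eq_mul]
      have h0 : (Fin.last 0) = (0 : Fin 1) := rfl
      simp only [ExtF, Matrix.of_apply, h0, Fin.cons_zero]
      have hX : ∀ (f : Fin 0 → Fin l) (g h : Fin 0 → Fin d),
          X f g h = X Fin.elim0 Fin.elim0 Fin.elim0 := by
        intro f g h
        congr 1 <;> exact Subsingleton.elim _ _
      rw [hX, one_apply_prod]
      split_ifs <;> simp_all [Matrix.one_apply]
    show (∑ j : Fin l, ptrace2 d ((K j)ᴴ *
      (Matrix.of fun u v : Fin d × Fin d =>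
        Phi d l K 0 (fun w => Matrix.of fun x y =>
          ExtF d l 0 X (Fin.cons j w) (Fin.cons u.1 x) (Fin.cons v.1 y)) u.2 v.2) * K j))
      = Phi d l K 0 X
    have hmul : ∀ j : Fin l, (K j)ᴴ *
        ((X Fin.elim0 Fin.elim0 Fin.elim0) • (1 : Matrix (Fin d × Fin d) (Fin d × Fin d) ℂ)) *
        K j = (X Fin.elim0 Fin.elim0 Fin.elim0) • ((K j)ᴴ * 1 * K j) := by
      intro j; rw [mul_smul_comm, smul_mul_assoc]
    simp only [hM, hmul, ptrace2_smul]
    rw [← Finset.smul_sum, ← ptrace2_sum]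
    show _ • Emap d l K 1 = _
    rw [hunital]
    rfl
  | succ m ih =>
    intro X
    have hfam : ∀ (j : Fin l) (u v : Fin d × Fin d),
        (fun w => Matrix.of fun x y =>
          ExtF d l (m+1) X (Fin.cons j w) (Fin.cons u.1 x) (Fin.cons v.1 y))
        = ExtF d l m (fun w => Matrix.of fun x y =>
            X (Fin.cons j w) (Fin.cons u.1 x) (Fin.cons v.1 y)) := by
      intro j u v
      funext w
      ext x y
      simp only [ExtF, Matrix.of_apply]
      rw [cons_last u.1 x, cons_last v.1 y, cons_castSucc j w, cons_castSucc u.1 x,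
        cons_castSucc v.1 y]
    have hM : ∀ j : Fin l, (Matrix.of fun u v : Fin d × Fin d =>
        Phi d l K (m+1) (fun w => Matrix.of fun x y =>
          ExtF d l (m+1) X (Fin.cons j w) (Fin.cons u.1 x) (Fin.cons v.1 y)) u.2 v.2)
        = (Matrix.of fun u v : Fin d × Fin d =>
            Phi d l K m (fun w => Matrix.of fun x y =>
              X (Fin.cons j w) (Fin.cons u.1 x) (Fin.cons v.1 y)) u.2 v.2) := by
      intro j
      ext u v
      simp only [Matrix.of_apply]
      rw [hfam j u v, ih]
    show (∑ j : Fin l, ptrace2 d ((K j)ᴴ *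
      (Matrix.of fun u v : Fin d × Fin d =>
        Phi d l K (m+1) (fun w => Matrix.of fun x y =>
          ExtF d l (m+1) X (Fin.cons j w) (Fin.cons u.1 x) (Fin.cons v.1 y)) u.2 v.2) * K j))
      = Phi d l K (m+1) X
    simp only [hM]
    rfl

end Stmt8Aux


namespace Stmt8Aux

lemma kronecker_one_posSemidef {α : Type*} [Fintype α] [DecidableEq α] (d : ℕ)
    {A : Matrix α α ℂ} (hA : A.PosSemidef) :
    (A ⊗ₖ (1 : Matrix (Fin d) (Fin d) ℂ)).PosSemidef := by
  obtain ⟨B, rfl⟩ := exists_eq_ct_mul hA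
  have : (Bᴴ * B) ⊗ₖ (1 : Matrix (Fin d) (Fin d) ℂ)
      = (B ⊗ₖ (1 : Matrix (Fin d) (Fin d) ℂ))ᴴ * (B ⊗ₖ (1 : Matrix (Fin d) (Fin d) ℂ)) := by
    have h1 : (Bᴴ * B) ⊗ₖ ((1 : Matrix (Fin d) (Fin d) ℂ) * 1)
        = (Bᴴ ⊗ₖ (1 : Matrix (Fin d) (Fin d) ℂ)) * (B ⊗ₖ (1 : Matrix (Fin d) (Fin d) ℂ)) :=
      Matrix.mul_kronecker_mul _ _ _ _
    rw [mul_one] at h1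
    rw [h1]
    congr 1
    ext ⟨a, r⟩ ⟨b, s⟩
    simp [Matrix.conjTranspose_apply, Matrix.kroneckerMap_apply, Matrix.one_apply,
      apply_ite (star : ℂ → ℂ)]
    by_cases h : r = s <;> simp [h, eq_comm]
  rw [this]
  exact Matrix.posSemidef_conjTranspose_mul_self _

lemma PhiAmp_posSemidef (d l : ℕ) (K : Fin l → Matrix (Fin d × Fin d) (Fin d × Fin d) ℂ) :
    ∀ (m : ℕ) (κ : Type) (_ : Fintype κ) (_ : DecidableEq κ)
      (Z : (Fin m → Fin l) → Matrix (κ × (Fin m → Fin d)) (κ × (Fin m → Fin d)) ℂ)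
      (_ : ∀ b, (Z b).PosSemidef),
      (Matrix.of fun u v : κ × Fin d =>
        Phi d l K m (fun w => Matrix.of fun x y => Z w (u.1, x) (v.1, y)) u.2 v.2).PosSemidef := by
  intro m
  induction m with
  | zero =>
    intro κ _ _ Z hZ
    have key : (Matrix.of fun u v : κ × Fin d =>
        Phi d l K 0 (fun w => Matrix.of fun x y => Z w (u.1, x) (v.1, y)) u.2 v.2)
        = ((Z Fin.elim0).submatrix (fun a : κ => (a, Fin.elim0)) (fun a : κ => (a, Fin.elim0)))
          ⊗ₖ (1 : Matrix (Fin d) (Fin d) ℂ) := by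
      ext u v
      simp only [Matrix.of_apply, Phi, Matrix.smul_apply, smul_eq_mul,
        Matrix.kroneckerMap_apply, Matrix.submatrix_apply]
    rw [key]
    exact kronecker_one_posSemidef d ((hZ _).submatrix _)
  | succ m ih =>
    intro κ _ _ Z hZ
    classical
    set G : Fin l → Matrix ((κ × Fin d) × Fin d) ((κ × Fin d) × Fin d) ℂ := fun j =>
      Matrix.of fun U V : (κ × Fin d) × Fin d =>
        Phi d l K m (fun w => Matrix.of fun x y =>
          Z (Fin.cons j w) (U.1.1, Fin.cons U.1.2 x) (V.1.1, Fin.cons V.1.2 y)) U.2 V.2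
      with hGdef
    have hG : ∀ j, (G j).PosSemidef := by
      intro j
      have := ih (κ × Fin d) inferInstance inferInstance
        (fun w => (Z (Fin.cons j w)).submatrix
          (fun q : (κ × Fin d) × (Fin m → Fin d) => (q.1.1, Fin.cons q.1.2 q.2))
          (fun q : (κ × Fin d) × (Fin m → Fin d) => (q.1.1, Fin.cons q.1.2 q.2)))
        (fun w => (hZ _).submatrix _)
      convert this using 2
      rfl
    set C : Fin l → Matrix ((κ × Fin d) × Fin d) ((κ × Fin d) × Fin d) ℂ := fun j =>
      Matrix.of fun U q : (κ × Fin d) × Fin d =>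
        if U.1.1 = q.1.1 then K j (U.1.2, U.2) (q.1.2, q.2) else 0
      with hCdef
    have key : (Matrix.of fun u v : κ × Fin d =>
        Phi d l K (m+1) (fun w => Matrix.of fun x y => Z w (u.1, x) (v.1, y)) u.2 v.2)
        = ∑ j : Fin l, ptr d ((C j)ᴴ * G j * C j) := by
      ext ⟨a, r⟩ ⟨b, s⟩
      simp only [Matrix.of_apply, Phi, Matrix.sum_apply, ptrace2, ptr,
        Matrix.mul_apply, Matrix.conjTranspose_apply, hGdef, hCdef,
        Fintype.sum_prod_type, apply_ite (star : ℂ → ℂ), star_zero, ite_mul, zero_mul,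
        mul_ite, mul_zero]
      refine Finset.sum_congr rfl fun j _ => ?_
      rw [Finset.sum_comm]
      simp only [Finset.sum_ite_irrel, Finset.sum_const_zero, Finset.sum_ite_eq',
        Finset.mem_univ, if_true]
      rw [Finset.sum_comm]
    rw [key]
    exact posSemidef_sum _ _ fun j _ => ptr_posSemidef d ((hG j).conjTranspose_mul_mul_same _)

end Stmt8Aux


namespace Stmt8Aux

lemma Phi_posSemidef (d l : ℕ) (K : Fin l → Matrix (Fin d × Fin d) (Fin d × Fin d) ℂ)
    (m : ℕ) (X : (Fin m → Fin l) → Matrix (Fin m → Fin d) (Fin m → Fin d) ℂ)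
    (hX : ∀ b, (X b).PosSemidef) : (Phi d l K m X).PosSemidef := by
  have h := PhiAmp_posSemidef d l K m Unit inferInstance inferInstance
    (fun w => (X w).submatrix (fun q : Unit × (Fin m → Fin d) => q.2)
      (fun q : Unit × (Fin m → Fin d) => q.2))
    (fun w => (hX w).submatrix _)
  have h2 := h.submatrix (fun r : Fin d => (((), r) : Unit × Fin d))
  exact h2

lemma PJ_entry_posSemidef {d : ℕ} (p : Fin d → Matrix (Fin d) (Fin d) ℂ)
    (hpherm : ∀ a, (p a)ᴴ = p a) (hpidem : ∀ a, p a * p a = p a)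
    (l m : ℕ) (J : Fin m → Fin d × Fin l) (b : Fin m → Fin l) :
    (PJ d l m p J b).PosSemidef := by
  rw [PJ]
  split
  · have key : (Matrix.of fun x y : Fin m → Fin d => ∏ i, p (J i).1 (x i) (y i))
        = (Matrix.of fun z x : Fin m → Fin d => ∏ i, p (J i).1 (z i) (x i))ᴴ *
          (Matrix.of fun z x : Fin m → Fin d => ∏ i, p (J i).1 (z i) (x i)) := by
      ext x y
      simp only [Matrix.mul_apply, Matrix.conjTranspose_apply, Matrix.of_apply]
      have hterm : ∀ z : Fin m → Fin d,
          star (∏ i, p (J i).1 (z i) (x i)) * ∏ i, p (J i).1 (z i) (y i)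
          = ∏ i, star (p (J i).1 (z i) (x i)) * p (J i).1 (z i) (y i) := by
        intro z
        rw [star_prod, ← Finset.prod_mul_distrib]
      simp only [hterm]
      have hps := Fintype.prod_sum (κ := fun _ : Fin m => Fin d)
        (f := fun i c => star (p (J i).1 c (x i)) * p (J i).1 c (y i))
      rw [← hps]
      refine Finset.prod_congr rfl fun i _ => ?_
      have : ∑ c : Fin d, star (p (J i).1 c (x i)) * p (J i).1 c (y i)
          = ((p (J i).1)ᴴ * p (J i).1) (x i) (y i) := by
        simp [Matrix.mul_apply, Matrix.conjTranspose_apply]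
      rw [this, hpherm, hpidem]
    rw [key]
    exact Matrix.posSemidef_conjTranspose_mul_self _
  · exact Matrix.PosSemidef.zero

end Stmt8Aux


namespace Stmt8Aux

lemma sum_PJ {d l : ℕ} (p : Fin d → Matrix (Fin d) (Fin d) ℂ)
    (hpsum : ∑ a, p a = 1) (m : ℕ) :
    (fun b => ∑ J : Fin m → Fin d × Fin l, PJ d l m p J b)
      = fun _ : Fin m → Fin l => (1 : Matrix (Fin m → Fin d) (Fin m → Fin d) ℂ) := by
  funext b
  ext x y
  simp only [Matrix.sum_apply]
  rw [← Equiv.sum_comp (Equiv.arrowProdEquivProdArrow (Fin m) (fun _ => Fin d) (fun _ => Fin l)).symm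
    (fun J => PJ d l m p J b x y)]
  rw [Fintype.sum_prod_type]
  simp only [Equiv.arrowProdEquivProdArrow_symm_apply, PJ,
    apply_ite (fun M : Matrix (Fin m → Fin d) (Fin m → Fin d) ℂ => M x y),
    Matrix.of_apply, Matrix.zero_apply]
  simp only [Finset.sum_ite_eq, Finset.mem_univ, if_true]
  have hps := Fintype.prod_sum (κ := fun _ : Fin m => Fin d)
    (f := fun i c => p c (x i) (y i))
  rw [← hps]
  have h1 : ∀ i : Fin m, ∑ c : Fin d, p c (x i) (y i)
      = (1 : Matrix (Fin d) (Fin d) ℂ) (x i) (y i) := by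
    intro i
    rw [← hpsum, Matrix.sum_apply]
  simp only [h1]
  by_cases hxy : x = y
  · simp [hxy, Matrix.one_apply]
  · obtain ⟨i, hi⟩ := Function.ne_iff.mp hxy
    rw [Matrix.one_apply_ne hxy]
    exact Finset.prod_eq_zero (Finset.mem_univ i) (Matrix.one_apply_ne hi)

lemma sum_PJ_snoc {d l : ℕ} (p : Fin d → Matrix (Fin d) (Fin d) ℂ)
    (hpsum : ∑ a, p a = 1) (m : ℕ) (J : Fin m → Fin d × Fin l) :
    (fun b => ∑ s : Fin d × Fin l, PJ d l (m+1) p (Fin.snoc J s) b)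
      = ExtF d l m (PJ d l m p J) := by
  funext b
  ext x y
  have hsnoc2 : ∀ s : Fin d × Fin l,
      (fun i => ((Fin.snoc J s : Fin (m+1) → Fin d × Fin l) i).2)
        = Fin.snoc (fun i => (J i).2) s.2 := by
    intro s
    funext i
    refine Fin.lastCases ?_ (fun i' => ?_) i <;> simp
  have hcond : ∀ c : Fin l, (b = Fin.snoc (fun i => (J i).2) c)
      ↔ ((fun i : Fin m => b i.castSucc) = (fun i => (J i).2) ∧ c = b (Fin.last m)) := by
    intro c
    constructor
    · intro h
      constructor
      · funext i
        rw [show b i.castSucc = _ from congrFun h i.castSucc, Fin.snoc_castSucc]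
      · rw [show b (Fin.last m) = _ from congrFun h (Fin.last m), Fin.snoc_last]
    · rintro ⟨h1, h2⟩
      funext i
      refine Fin.lastCases ?_ (fun i' => ?_) i
      · rw [Fin.snoc_last, h2]
      · rw [Fin.snoc_castSucc]
        exact congrFun h1 i'
  have hprod : ∀ s : Fin d × Fin l,
      (∏ i, p ((Fin.snoc J s : Fin (m+1) → Fin d × Fin l) i).1 (x i) (y i))
        = (∏ i : Fin m, p (J i).1 (x i.castSucc) (y i.castSucc))
            * p s.1 (x (Fin.last m)) (y (Fin.last m)) := by
    intro s
    rw [Fin.prod_univ_castSucc]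
    simp
  have hlast : ∑ a : Fin d, p a (x (Fin.last m)) (y (Fin.last m))
      = (1 : Matrix (Fin d) (Fin d) ℂ) (x (Fin.last m)) (y (Fin.last m)) := by
    rw [← hpsum, Matrix.sum_apply]
  simp only [Matrix.sum_apply, PJ,
    apply_ite (fun M : Matrix (Fin (m+1) → Fin d) (Fin (m+1) → Fin d) ℂ => M x y),
    Matrix.of_apply, Matrix.zero_apply]
  simp only [hsnoc2, hprod]
  rw [Fintype.sum_prod_type]
  simp only [hcond, ite_and, Finset.sum_ite_irrel, Finset.sum_const_zero,
    Finset.sum_ite_eq', Finset.mem_univ, if_true]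
  simp only [← Finset.mul_sum, hlast]
  simp only [ExtF, Matrix.of_apply, PJ,
    apply_ite (fun M : Matrix (Fin m → Fin d) (Fin m → Fin d) ℂ =>
      M (fun i => x i.castSucc) (fun i => y i.castSucc)),
    Matrix.zero_apply]
  rw [Matrix.one_apply]
  split_ifs <;> ring

lemma sum_Phi_cons {d l : ℕ} (K : Fin l → Matrix (Fin d × Fin d) (Fin d × Fin d) ℂ)
    (p : Fin d → Matrix (Fin d) (Fin d) ℂ) (hpsum : ∑ a, p a = 1)
    (m : ℕ) (J : Fin m → Fin d × Fin l) :
    ∑ s : Fin d × Fin l, Phi d l K (m+1) (PJ d l (m+1) p (Fin.cons s J))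
      = Emap d l K ((1 : Matrix (Fin d) (Fin d) ℂ) ⊗ₖ Phi d l K m (PJ d l m p J)) := by
  rw [← Phi_sum]
  have hM : ∀ j : Fin l, (Matrix.of fun u v : Fin d × Fin d =>
      Phi d l K m (fun w => Matrix.of fun x y =>
        (fun b => ∑ s : Fin d × Fin l, PJ d l (m+1) p (Fin.cons s J) b)
          (Fin.cons j w) (Fin.cons u.1 x) (Fin.cons v.1 y)) u.2 v.2)
      = (1 : Matrix (Fin d) (Fin d) ℂ) ⊗ₖ Phi d l K m (PJ d l m p J) := by
    intro j
    ext u v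
    simp only [Matrix.of_apply]
    have hfam : (fun w => Matrix.of fun x y =>
        (fun b => ∑ s : Fin d × Fin l, PJ d l (m+1) p (Fin.cons s J) b)
          (Fin.cons j w) (Fin.cons u.1 x) (Fin.cons v.1 y))
        = fun w => ∑ s : Fin d × Fin l,
            (if j = s.2 then p s.1 u.1 v.1 else 0) • PJ d l m p J w := by
      funext w
      ext x y
      simp only [Matrix.sum_apply, Matrix.of_apply, Matrix.smul_apply, smul_eq_mul]
      refine Finset.sum_congr rfl fun s _ => ?_
      have hc2 : (fun i => ((Fin.cons s J : Fin (m+1) → Fin d × Fin l) i).2)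
          = Fin.cons s.2 (fun i => (J i).2) := by
        funext i
        refine Fin.cases ?_ (fun i' => ?_) i <;> simp
      have hpr : (∏ i, p ((Fin.cons s J : Fin (m+1) → Fin d × Fin l) i).1
            ((Fin.cons u.1 x : Fin (m+1) → Fin d) i) ((Fin.cons v.1 y : Fin (m+1) → Fin d) i))
          = p s.1 u.1 v.1 * ∏ i : Fin m, p (J i).1 (x i) (y i) := by
        rw [Fin.prod_univ_succ]
        simp
      simp only [PJ, hc2,
        apply_ite (fun M : Matrix (Fin (m+1) → Fin d) (Fin (m+1) → Fin d) ℂ =>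
          M (Fin.cons u.1 x) (Fin.cons v.1 y)),
        apply_ite (fun M : Matrix (Fin m → Fin d) (Fin m → Fin d) ℂ => M x y),
        Matrix.of_apply, Matrix.zero_apply, Fin.cons_inj, ite_and, hpr]
      split_ifs <;> ring
    rw [hfam, Phi_lincomb]
    simp only [Matrix.sum_apply, Matrix.smul_apply, smul_eq_mul]
    rw [← Finset.sum_mul]
    have hsum1 : ∑ s : Fin d × Fin l, (if j = s.2 then p s.1 u.1 v.1 else 0)
        = (1 : Matrix (Fin d) (Fin d) ℂ) u.1 v.1 := by
      rw [Fintype.sum_prod_type]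
      simp only [Finset.sum_ite_eq, Finset.mem_univ, if_true]
      rw [← hpsum, Matrix.sum_apply]
    rw [hsum1]
    rfl
  show (∑ j : Fin l, ptrace2 d ((K j)ᴴ *
      (Matrix.of fun u v : Fin d × Fin d =>
        Phi d l K m (fun w => Matrix.of fun x y =>
          (fun b => ∑ s : Fin d × Fin l, PJ d l (m+1) p (Fin.cons s J) b)
            (Fin.cons j w) (Fin.cons u.1 x) (Fin.cons v.1 y)) u.2 v.2) * K j)) = _
  simp only [hM]
  rw [Emap_eq]

end Stmt8Aux

/-- The numbers `p_J = φ̄ₘ(P_J) = Tr(W ⋅ Phi(P_J))`, indexed by finite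
strings `J` over `Σ = {1,…,d} × {1,…,l}`, form a shift-consistent stochastic process:
(i) `p_J ≥ 0` (in the complex order, i.e. `p_J` is real and nonnegative);
(ii) `∑_{J ∈ Σᵐ} p_J = 1` for every `m ≥ 1`;
(iii) `∑ₛ p_{Js} = p_J` and `∑ₛ p_{sJ} = p_J` for every string `J` and letters `s ∈ Σ`. -/
theorem stmt8 (d l : ℕ) (hd : 1 ≤ d) (hl : 1 ≤ l)
    (K : Fin l → Matrix (Fin d × Fin d) (Fin d × Fin d) ℂ)
    (hunital : Emap d l K 1 = 1)
    (W : Matrix (Fin d) (Fin d) ℂ) (hW : W.PosSemidef) (hWtr : W.trace = 1)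
    (hinvW : ∀ C : Matrix (Fin d) (Fin d) ℂ,
      (W * Emap d l K ((1 : Matrix (Fin d) (Fin d) ℂ) ⊗ₖ C)).trace = (W * C).trace)
    (p : Fin d → Matrix (Fin d) (Fin d) ℂ)
    (hpherm : ∀ a, (p a)ᴴ = p a) (hpidem : ∀ a, p a * p a = p a)
    (hprank : ∀ a, (p a).rank = 1)
    (hporth : ∀ a b, a ≠ b → p a * p b = 0)
    (hpsum : ∑ a, p a = 1) :
    (∀ (m : ℕ) (J : Fin m → Fin d × Fin l),
      0 ≤ (W * Phi d l K m (PJ d l m p J)).trace) ∧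
    (∀ m : ℕ, 1 ≤ m →
      ∑ J : Fin m → Fin d × Fin l, (W * Phi d l K m (PJ d l m p J)).trace = 1) ∧
    (∀ (m : ℕ) (J : Fin m → Fin d × Fin l),
      (∑ s : Fin d × Fin l,
        (W * Phi d l K (m + 1) (PJ d l (m + 1) p (Fin.snoc J s))).trace =
          (W * Phi d l K m (PJ d l m p J)).trace) ∧
      (∑ s : Fin d × Fin l,
        (W * Phi d l K (m + 1) (PJ d l (m + 1) p (Fin.cons s J))).trace =
          (W * Phi d l K m (PJ d l m p J)).trace)) := by
  refine ⟨?_, ?_, ?_⟩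
  · intro m J
    exact Stmt8Aux.trace_mul_nonneg hW
      (Stmt8Aux.Phi_posSemidef d l K m (PJ d l m p J)
        (fun b => Stmt8Aux.PJ_entry_posSemidef p hpherm hpidem l m J b))
  · intro m _
    have h1 : ∑ J : Fin m → Fin d × Fin l, Phi d l K m (PJ d l m p J) = 1 := by
      rw [← Stmt8Aux.Phi_sum, Stmt8Aux.sum_PJ p hpsum m, Stmt8Aux.Phi_one d l K hunital]
    calc ∑ J : Fin m → Fin d × Fin l, (W * Phi d l K m (PJ d l m p J)).trace
        = (W * ∑ J : Fin m → Fin d × Fin l, Phi d l K m (PJ d l m p J)).trace := by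
          rw [Matrix.mul_sum, Matrix.trace_sum]
      _ = 1 := by rw [h1, mul_one, hWtr]
  · intro m J
    constructor
    · have h2 : ∑ s : Fin d × Fin l, Phi d l K (m+1) (PJ d l (m+1) p (Fin.snoc J s))
          = Phi d l K m (PJ d l m p J) := by
        rw [← Stmt8Aux.Phi_sum, Stmt8Aux.sum_PJ_snoc p hpsum m J,
          Stmt8Aux.Phi_ext d l K hunital]
      calc ∑ s : Fin d × Fin l,
            (W * Phi d l K (m+1) (PJ d l (m+1) p (Fin.snoc J s))).trace
          = (W * ∑ s : Fin d × Fin l,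
              Phi d l K (m+1) (PJ d l (m+1) p (Fin.snoc J s))).trace := by
            rw [Matrix.mul_sum, Matrix.trace_sum]
        _ = (W * Phi d l K m (PJ d l m p J)).trace := by rw [h2]
    · calc ∑ s : Fin d × Fin l,
            (W * Phi d l K (m+1) (PJ d l (m+1) p (Fin.cons s J))).trace
          = (W * ∑ s : Fin d × Fin l,
              Phi d l K (m+1) (PJ d l (m+1) p (Fin.cons s J))).trace := by
            rw [Matrix.mul_sum, Matrix.trace_sum]
        _ = (W * Emap d l K ((1 : Matrix (Fin d) (Fin d) ℂ) ⊗ₖ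
              Phi d l K m (PJ d l m p J))).trace := by
            rw [Stmt8Aux.sum_Phi_cons K p hpsum m J]
        _ = (W * Phi d l K m (PJ d l m p J)).trace := hinvW _
end
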